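/- arXiv:1208.1876 — 2 statements merged into one kernel-verified Lean document; each statement's English description precedes it below -/
import Mathlib

section
/- Let μ be a nontrivial finite Borel measure on ℝ^m, let ψ be a fixed nonnegative compactly supported smooth function on ℝ^m, not identically zero, and for δ_j = 2^{−j} set ψ_{δ_j}(x) = δ_j^{−m} ψ(x/δ_j). Suppose there are 0 < s < m and a constant C < ∞ such that ‖μ ∗ ψ_{δ_j}‖_{L²}² ≤ C δ_j^{s − m} for all j ∈ ℕ. Then dim_H(spt μ) ≥ s. -/
open MeasureTheory Metric Set Filter
open scoped ENNReal NNReal Topology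

noncomputable section

/-- `ℝⁿ` with the Euclidean structure. -/
abbrev Euc (n : ℕ) : Type := EuclideanSpace ℝ (Fin n)

/-- The orthogonal projection onto a subspace `K ⊆ ℝⁿ`, viewed as a map `ℝⁿ → ℝⁿ`. -/
def projCLM {n : ℕ} (K : Submodule ℝ (Euc n)) : Euc n →L[ℝ] Euc n :=
  K.subtypeL.comp K.orthogonalProjectionOnto

lemma projCLM_apply_mem {n : ℕ} (K : Submodule ℝ (Euc n)) (x : Euc n) : projCLM K x ∈ K :=
  (K.orthogonalProjectionOnto x).2

lemma projCLM_apply_of_mem {n : ℕ} {K : Submodule ℝ (Euc n)} {x : Euc n} (hx : x ∈ K) :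
    projCLM K x = x := by
  exact (Submodule.starProjection_eq_self_iff (K := K) (v := x)).mpr hx

lemma projCLM_injective {n : ℕ} : Function.Injective (projCLM (n := n)) := by
  have key : ∀ A B : Submodule ℝ (Euc n), projCLM A = projCLM B → A ≤ B := by
    intro A B hAB x hx
    have h1 : projCLM A x = x := projCLM_apply_of_mem hx
    have h2 : projCLM B x ∈ B := projCLM_apply_mem B x
    rw [hAB] at h1
    rwa [h1] at h2
  intro A B h
  exact le_antisymm (key A B h) (key B A h.symm)

/-- The Grassmannian `G(k, m)` of `m`-dimensional linear subspaces of `ℝᵏ`. -/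
def Grass (k m : ℕ) : Type := {V : Submodule ℝ (Euc k) // Module.finrank ℝ V = m}

/-- The metric `d_π(V, W) = ‖π_V - π_W‖` on the Grassmannian. -/
instance {k m : ℕ} : MetricSpace (Grass k m) :=
  MetricSpace.induced (fun V => projCLM V.1)
    (fun V W h => Subtype.ext (projCLM_injective h)) inferInstance

instance {k m : ℕ} : MeasurableSpace (Grass k m) := borel _
instance {k m : ℕ} : BorelSpace (Grass k m) := ⟨rfl⟩

/-- The action of an orthogonal transformation of `ℝᵏ` on the Grassmannian. -/
def Grass.map {k m : ℕ} (f : Euc k ≃ₗᵢ[ℝ] Euc k) (V : Grass k m) : Grass k m :=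
  ⟨V.1.map (f.toLinearEquiv : Euc k →ₗ[ℝ] Euc k),
    (LinearEquiv.finrank_map_eq _ _).trans V.2⟩

/-- `γ_{k,m}` : the natural `O(k)`-invariant (probability) measure on `G(k,m)`. -/
def GHaarMeasure {k m : ℕ} (γ : Measure (Grass k m)) : Prop :=
  IsProbabilityMeasure γ ∧ ∀ f : Euc k ≃ₗᵢ[ℝ] Euc k, Measure.map (Grass.map f) γ = γ

/-- The subspace of `ℝⁿ` of vectors supported on the coordinates satisfying `p`. -/
def coordSub (n : ℕ) (p : Fin n → Prop) [DecidablePred p] : Submodule ℝ (Euc n) where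
  carrier := {x | ∀ i, ¬ p i → x i = 0}
  add_mem' := by
    intro x y hx hy i hi
    show x i + y i = 0
    rw [hx i hi, hy i hi, add_zero]
  zero_mem' := by intro i _; rfl
  smul_mem' := by
    intro c x hx i hi
    show c * x i = 0
    rw [hx i hi, mul_zero]

/-- `ℝ^{n-l} × {0}` inside `ℝⁿ`. -/
def lowS (n l : ℕ) : Submodule ℝ (Euc n) := coordSub n (fun i => (i : ℕ) < n - l)

/-- `{0} × ℝˡ` inside `ℝⁿ`. -/
def highS (n l : ℕ) : Submodule ℝ (Euc n) := coordSub n (fun i => ¬ ((i : ℕ) < n - l))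

/-- The Grassmannian `G(n-l, m-l)`, realized as the family of `(m-l)`-dimensional subspaces
`V` of `ℝ^{n-l} × {0} ⊆ ℝⁿ`. -/
def VGrass (n m l : ℕ) : Type :=
  {V : Submodule ℝ (Euc n) // V ≤ lowS n l ∧ Module.finrank ℝ V = m - l}

/-- The metric `d_π(V, W) = ‖π_V - π_W‖` on `G(n-l, m-l)`. -/
instance {n m l : ℕ} : MetricSpace (VGrass n m l) :=
  MetricSpace.induced (fun V => projCLM V.1)
    (fun V W h => Subtype.ext (projCLM_injective h)) inferInstance

instance {n m l : ℕ} : MeasurableSpace (VGrass n m l) := borel _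
instance {n m l : ℕ} : BorelSpace (VGrass n m l) := ⟨rfl⟩

/-- The `m`-dimensional subspace `𝕍 = V × ℝˡ` of `ℝⁿ`. -/
def vertSpan {n m l : ℕ} (V : VGrass n m l) : Submodule ℝ (Euc n) := V.1 ⊔ highS n l

/-- `B_𝕍 = π_𝕍(B)`, the image of `B` under the orthogonal projection onto `𝕍 = V × ℝˡ`. -/
def projIm {n m l : ℕ} (V : VGrass n m l) (B : Set (Euc n)) : Set (Euc n) :=
  (projCLM (vertSpan V)) '' B

/-- The action on `G(n-l,m-l)` of an orthogonal transformation of `ℝⁿ` preserving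
`ℝ^{n-l} × {0}`. -/
def VGrass.map {n m l : ℕ} (f : Euc n ≃ₗᵢ[ℝ] Euc n)
    (hf : ∀ x ∈ lowS n l, f x ∈ lowS n l) (V : VGrass n m l) : VGrass n m l :=
  ⟨V.1.map (f.toLinearEquiv : Euc n →ₗ[ℝ] Euc n),
    ⟨Submodule.map_le_iff_le_comap.mpr (fun x hx => hf x (V.2.1 hx)),
     (LinearEquiv.finrank_map_eq _ _).trans V.2.2⟩⟩

/-- `γ_{n-l,m-l}` : the natural `O(n-l)`-invariant (probability) measure on `G(n-l,m-l)`,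
where `O(n-l)` is realized as the group of orthogonal transformations of `ℝⁿ` fixing
`{0} × ℝˡ` pointwise and preserving `ℝ^{n-l} × {0}`. -/
def VHaarMeasure {n m l : ℕ} (γ : Measure (VGrass n m l)) : Prop :=
  IsProbabilityMeasure γ ∧
    ∀ (f : Euc n ≃ₗᵢ[ℝ] Euc n) (_ : ∀ x ∈ highS n l, f x = x)
      (hf : ∀ x ∈ lowS n l, f x ∈ lowS n l),
      Measure.map (VGrass.map f hf) γ = γ

/-- `N(E, δ)`: the least number of closed `δ`-balls needed to cover `E` (`∞` if there
is no finite cover). -/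
def covN {X : Type*} [PseudoMetricSpace X] (E : Set X) (δ : ℝ) : ℝ≥0∞ :=
  ⨅ (S : Finset X) (_ : E ⊆ ⋃ x ∈ S, closedBall x δ), (S.card : ℝ≥0∞)

/-- `log N(E,δ) / (-log δ)`, the ratio appearing in the definition of box dimensions. -/
def boxRatio {X : Type*} [PseudoMetricSpace X] (E : Set X) (δ : ℝ) : ℝ≥0∞ :=
  if covN E δ = ⊤ then ⊤
  else ENNReal.ofReal (Real.log ((covN E δ).toReal) / -Real.log δ)

/-- Upper box (Minkowski) dimension. -/
def ubDim {X : Type*} [PseudoMetricSpace X] (E : Set X) : ℝ≥0∞ :=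
  limsup (boxRatio E) (𝓝[>] (0 : ℝ))

/-- Lower box (Minkowski) dimension. -/
def lbDim {X : Type*} [PseudoMetricSpace X] (E : Set X) : ℝ≥0∞ :=
  liminf (boxRatio E) (𝓝[>] (0 : ℝ))

/-- Packing dimension. -/
def packDim {X : Type*} [PseudoMetricSpace X] (E : Set X) : ℝ≥0∞ :=
  ⨅ (F : ℕ → Set X) (_ : E ⊆ ⋃ j, F j), ⨆ j, ubDim (F j)

/-- Modified lower box dimension. -/
def mlbDim {X : Type*} [PseudoMetricSpace X] (E : Set X) : ℝ≥0∞ :=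
  ⨅ (F : ℕ → Set X) (_ : E ⊆ ⋃ j, F j), ⨆ j, lbDim (F j)

/-- The `s`-energy `I_s(μ) = ∬ |x-y|^{-s} dμ(x) dμ(y)` of a measure. -/
def energy {X : Type*} [MeasurableSpace X] [PseudoEMetricSpace X] (μ : Measure X) (s : ℝ) :
    ℝ≥0∞ :=
  ∫⁻ x, ∫⁻ y, edist x y ^ (-s) ∂μ ∂μ

/-- The (closed) support `spt μ` of a measure. -/
def measSupport {X : Type*} [PseudoMetricSpace X] [MeasurableSpace X] (μ : Measure X) :
    Set X :=
  {x | ∀ r : ℝ, 0 < r → 0 < μ (ball x r)}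

/-- The convolution `μ ∗ g` of a measure with a function: `(μ ∗ g)(x) = ∫ g(x-y) dμ(y)`. -/
def mconv {n : ℕ} (μ : Measure (Euc n)) (g : Euc n → ℝ) (x : Euc n) : ℝ :=
  ∫ y, g (x - y) ∂μ

/-- The mollification `g_δ(x) = δ^{-d} g(x/δ)`. -/
def moll {n : ℕ} (d : ℕ) (g : Euc n → ℝ) (δ : ℝ) (x : Euc n) : ℝ :=
  (δ ^ d)⁻¹ * g (δ⁻¹ • x)

/-- The dyadic discretization `μ^δ = ∑_{Q ∈ 𝒟_δ} (μ(Q)/δⁿ) χ_Q` of a measure on `ℝⁿ`. -/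
def dyDensity {n : ℕ} (μ : Measure (Euc n)) (δ : ℝ) (x : Euc n) : ℝ :=
  (μ {y | ∀ i, Int.floor (y i / δ) = Int.floor (x i / δ)}).toReal / δ ^ n

/-- The dyadic cube of side length `δ` indexed by `k ∈ ℤ^d`. -/
def dyCube (d : ℕ) (δ : ℝ) (k : Fin d → ℤ) : Set (Euc d) :=
  {x | ∀ i, δ * k i ≤ x i ∧ x i < δ * (k i + 1)}

/-- The `d`-dimensional Hausdorff measure, normalized (by the isodiametric constant
`ω_d / 2^d`) so that on `d`-dimensional affine subspaces it coincides with Lebesgue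
measure. -/
def euclHaus (X : Type*) [EMetricSpace X] [MeasurableSpace X] [BorelSpace X] (d : ℕ) :
    Measure X :=
  (ENNReal.ofReal (Real.sqrt Real.pi ^ d / (2 ^ d * Real.Gamma ((d : ℝ) / 2 + 1)))) •
    MeasureTheory.Measure.hausdorffMeasure (d : ℝ)

/-- The fiber integral `x ↦ ∫_{π_𝕍^{-1}{x}} f dℋ^{n-m}`; this is the density of the
pushforward `π_{𝕍♯}(f · vol)` and, applied to `f = Ψ`, the projection `Ψ_𝕍`. -/
def fiberIntegral {n m l : ℕ} (V : VGrass n m l) (f : Euc n → ℝ) (x : Euc n) : ℝ :=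
  ∫ y, f y ∂((euclHaus (Euc n) (n - m)).restrict ((projCLM (vertSpan V)) ⁻¹' {x}))

/-- The squared `L²(𝕍)`-norm of the density of the pushforward `π_{𝕍♯}(f · vol)`. -/
def projL2sq {n m l : ℕ} (V : VGrass n m l) (f : Euc n → ℝ) : ℝ≥0∞ :=
  ∫⁻ x, ENNReal.ofReal ((fiberIntegral V f x) ^ 2)
    ∂((euclHaus (Euc n) m).restrict (vertSpan V : Set (Euc n)))

/-- A `δ`-separated set in a metric space. -/
def sep {X : Type*} [PseudoMetricSpace X] (δ : ℝ) (E : Set X) : Prop :=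
  ∀ x ∈ E, ∀ y ∈ E, x ≠ y → δ ≤ dist x y

/-- A `(δ, m)`-set with constant `C₀`: a `δ`-separated subset of `B(0,1) ⊆ ℝⁿ` such that
every ball of radius `r ≥ δ` contains at most `C₀ (r/δ)^m` of its points. -/
def IsDeltaMSet (n : ℕ) (C₀ δ : ℝ) (m : ℕ) (C : Finset (Euc n)) : Prop :=
  (C : Set (Euc n)) ⊆ closedBall 0 1 ∧ sep δ (C : Set (Euc n)) ∧
    ∀ (x : Euc n) (r : ℝ), δ ≤ r →
      (((C : Set (Euc n)) ∩ closedBall x r).ncard : ℝ) ≤ C₀ * (r / δ) ^ m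

/-- `Λ_m ℝⁿ`, the space of `m`-vectors over `ℝⁿ` with its natural inner product: the
coordinate model in which the wedge products of the standard basis vectors form an
orthonormal basis. -/
abbrev Lam (n m : ℕ) : Type := EuclideanSpace ℝ {s : Finset (Fin n) // s.card = m}

/-- The simple `m`-vector `v₁ ∧ ⋯ ∧ v_m`, in coordinates (Plücker coordinates): its
`I`-th coordinate is `det (v_i(a_j))_{ij}` where `a₁ < ⋯ < a_m` enumerates `I`. -/
def wedge {n m : ℕ} (v : Fin m → Euc n) : Lam n m :=
  (WithLp.equiv 2 ({s : Finset (Fin n) // s.card = m} → ℝ)).symm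
    (fun I => Matrix.det (Matrix.of fun i j => v i ((I.1.orderIsoOfFin I.2 j : Fin n))))

end


noncomputable section AuxLemmasForMainProof

lemma frostman_dimH {X : Type*} [MetricSpace X] [MeasurableSpace X] [BorelSpace X]
    (μ : Measure X) (A : Set X) (hA : MeasurableSet A) (t : ℝ) (ht : 0 ≤ t)
    (M : ℝ≥0∞) (hM0 : M ≠ 0) (hMtop : M ≠ ⊤)
    (hfrost : ∀ x ∈ A, ∀ r : ℝ≥0∞, μ (EMetric.closedBall x r) ≤ M * r ^ t)
    (hpos : μ A ≠ 0) : ENNReal.ofReal t ≤ dimH A := by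
  have key : (M⁻¹ • μ.restrict A) ≤ MeasureTheory.Measure.hausdorffMeasure t := by
    apply MeasureTheory.Measure.le_hausdorffMeasure t _ 1 one_pos
    intro s hs
    rcases (s ∩ A).eq_empty_or_nonempty with h | ⟨x, hxs, hxA⟩
    · simp [Measure.smul_apply, Measure.restrict_apply' hA, h]
    · have h1 : μ (s ∩ A) ≤ M * EMetric.diam s ^ t := by
        refine le_trans (measure_mono ?_) (hfrost x hxA (EMetric.diam s))
        intro y hy
        exact EMetric.mem_closedBall.2 (EMetric.edist_le_diam_of_mem hy.1 hxs)
      calc (M⁻¹ • μ.restrict A) s = M⁻¹ * μ (s ∩ A) := by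
            rw [Measure.smul_apply, smul_eq_mul, Measure.restrict_apply' hA]
        _ ≤ M⁻¹ * (M * EMetric.diam s ^ t) := by gcongr
        _ = (M⁻¹ * M) * EMetric.diam s ^ t := by ring
        _ = EMetric.diam s ^ t := by rw [ENNReal.inv_mul_cancel hM0 hMtop, one_mul]
  have h2 : MeasureTheory.Measure.hausdorffMeasure (X := X) t A ≠ 0 := by
    have := key A
    rw [Measure.smul_apply, smul_eq_mul, Measure.restrict_apply' hA, Set.inter_self] at this
    intro h0
    rw [h0] at this
    exact absurd (le_antisymm this zero_le) (mul_ne_zero (ENNReal.inv_ne_zero.2 hMtop) hpos)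
  have h3 : (t.toNNReal : ℝ≥0∞) ≤ dimH A := by
    apply le_dimH_of_hausdorffMeasure_ne_zero
    rwa [Real.coe_toNNReal t ht]
  exact h3

lemma isClosed_measSupport {X : Type*} [MetricSpace X] [MeasurableSpace X] (μ : Measure X) :
    IsClosed (measSupport μ) := by
  rw [← isOpen_compl_iff, Metric.isOpen_iff]
  intro x hx
  simp only [measSupport, mem_compl_iff, mem_setOf_eq, not_forall] at hx
  obtain ⟨r, hr, hr2⟩ := hx
  push_neg at hr2
  have hr2 : μ (ball x r) = 0 := le_antisymm hr2 zero_le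
  refine ⟨r/2, by linarith, fun y hy => ?_⟩
  simp only [measSupport, mem_compl_iff, mem_setOf_eq, not_forall]
  refine ⟨r/2, by linarith, ?_⟩
  have : ball y (r/2) ⊆ ball x r := by
    intro z hz
    have := mem_ball.1 hz
    have h2 := mem_ball.1 hy
    exact mem_ball.2 (by have := dist_triangle z y x; linarith)
  simp [le_antisymm (hr2 ▸ measure_mono this) zero_le]


lemma measure_compl_measSupport {X : Type*} [MetricSpace X] [SecondCountableTopology X]
    [MeasurableSpace X] (μ : Measure X) : μ (measSupport μ)ᶜ = 0 := by
  have hx : ∀ x : ((measSupport μ)ᶜ : Set X), ∃ r : ℝ, 0 < r ∧ μ (ball (x : X) r) = 0 := by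
    rintro ⟨x, hx⟩
    simp only [measSupport, mem_compl_iff, mem_setOf_eq, not_forall] at hx
    obtain ⟨r, hr, hr2⟩ := hx
    exact ⟨r, hr, by simpa using hr2⟩
  choose r hr hr0 using hx
  obtain ⟨T, hTc, hTU⟩ := TopologicalSpace.isOpen_iUnion_countable
    (fun i : ((measSupport μ)ᶜ : Set X) => ball (i : X) (r i)) (fun i => isOpen_ball)
  have hsub : (measSupport μ)ᶜ ⊆ ⋃ i ∈ T, ball (i : X) (r i) := by
    rw [hTU]
    intro x hxc
    exact mem_iUnion.2 ⟨⟨x, hxc⟩, mem_ball_self (hr ⟨x, hxc⟩)⟩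
  refine le_antisymm (le_trans (measure_mono hsub) ?_) zero_le
  exact le_of_eq ((measure_biUnion_null_iff hTc).2 (fun i _ => hr0 i))

lemma dimH_ge_of_energy {X : Type*} [MetricSpace X] [SecondCountableTopology X]
    [MeasurableSpace X] [BorelSpace X]
    (μ : Measure X) [IsFiniteMeasure μ] (hμ : μ ≠ 0) (t : ℝ) (ht : 0 < t)
    (hE : ∫⁻ p, edist p.1 p.2 ^ (-t) ∂(μ.prod μ) < ⊤) :
    ENNReal.ofReal t ≤ dimH (measSupport μ) := by
  set g : X → ℝ≥0∞ := fun x => ∫⁻ y, edist x y ^ (-t) ∂μ with hg_def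
  have hmeas : Measurable (fun p : X × X => edist p.1 p.2 ^ (-t)) :=
    measurable_edist.pow_const _
  have hg : Measurable g := hmeas.lintegral_prod_right'
  have hgint : ∫⁻ x, g x ∂μ < ⊤ := by
    rw [hg_def]
    rw [← MeasureTheory.lintegral_prod _ hmeas.aemeasurable]
    exact hE
  have hae : ∀ᵐ x ∂μ, g x < ⊤ := ae_lt_top hg hgint.ne
  -- the sets A n
  set A : ℕ → Set X := fun n => measSupport μ ∩ {x | g x ≤ n} with hA_def
  have hAmeas : ∀ n, MeasurableSet (A n) := fun n =>
    ((isClosed_measSupport μ).measurableSet).inter (hg measurableSet_Iic)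
  -- some A n has positive measure
  have hexists : ∃ n, μ (A n) ≠ 0 := by
    by_contra h
    push_neg at h
    have hU : μ (⋃ n, A n) = 0 := measure_iUnion_null h
    have hcover : univ ⊆ (⋃ n, A n) ∪ ((measSupport μ)ᶜ ∪ {x | ¬ g x < ⊤}) := by
      intro x _
      by_cases h1 : x ∈ measSupport μ
      · by_cases h2 : g x < ⊤
        · obtain ⟨n, hn⟩ := ENNReal.exists_nat_gt h2.ne
          exact Or.inl (mem_iUnion.2 ⟨n, h1, hn.le⟩)
        · exact Or.inr (Or.inr h2)
      · exact Or.inr (Or.inl h1)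
    have : μ univ = 0 := by
      refine le_antisymm (le_trans (measure_mono hcover) ?_) zero_le
      refine le_trans (measure_union_le _ _) ?_
      rw [hU, zero_add]
      refine le_trans (measure_union_le _ _) ?_
      rw [measure_compl_measSupport μ, zero_add]
      have : μ {x | ¬ g x < ⊤} = 0 := hae
      rw [this]
    exact hμ (Measure.measure_univ_eq_zero.1 this)
  obtain ⟨n, hn⟩ := hexists
  -- Frostman bound on A n
  set M : ℝ≥0∞ := (n : ℝ≥0∞) + 1 with hM_def
  have hM0 : M ≠ 0 := by simp [hM_def]
  have hMtop : M ≠ ⊤ := by simp [hM_def]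
  have hfrost0 : ∀ x ∈ A n, ∀ r : ℝ≥0∞, r ≠ 0 → r ≠ ⊤ →
      μ (EMetric.closedBall x r) ≤ M * r ^ t := by
    intro x hx r hr0 hrtop
    have hgx : g x ≤ M := le_trans hx.2 le_self_add
    have hrt0 : r ^ t ≠ 0 := (ENNReal.rpow_pos (pos_iff_ne_zero.2 hr0) hrtop).ne'
    have hrttop : r ^ t ≠ ⊤ := ENNReal.rpow_ne_top_of_nonneg ht.le hrtop
    have key : μ (EMetric.closedBall x r) * r ^ (-t) ≤ M := by
      have h1 : ∀ y ∈ EMetric.closedBall x r, r ^ (-t) ≤ edist x y ^ (-t) := by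
        intro y hy
        have : edist x y ≤ r := by rw [edist_comm]; exact EMetric.mem_closedBall.1 hy
        rw [ENNReal.rpow_neg, ENNReal.rpow_neg]
        exact ENNReal.inv_le_inv.2 (ENNReal.rpow_le_rpow this ht.le)
      calc μ (EMetric.closedBall x r) * r ^ (-t)
          = ∫⁻ _ in EMetric.closedBall x r, r ^ (-t) ∂μ := by
            rw [setLIntegral_const, mul_comm]
        _ ≤ ∫⁻ y in EMetric.closedBall x r, edist x y ^ (-t) ∂μ := by
            refine setLIntegral_mono (hmeas.comp (measurable_prodMk_left)) h1
        _ ≤ g x := lintegral_mono' Measure.restrict_le_self le_rfl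
        _ ≤ M := hgx
    calc μ (EMetric.closedBall x r) =
        μ (EMetric.closedBall x r) * (r ^ (-t) * r ^ t) := by
          rw [ENNReal.rpow_neg, ENNReal.inv_mul_cancel hrt0 hrttop, mul_one]
      _ = (μ (EMetric.closedBall x r) * r ^ (-t)) * r ^ t := by ring
      _ ≤ M * r ^ t := by gcongr
  have hfrost : ∀ x ∈ A n, ∀ r : ℝ≥0∞, μ (EMetric.closedBall x r) ≤ M * r ^ t := by
    intro x hx r
    rcases eq_or_ne r 0 with rfl | hr0
    · -- atom case
      have hxx : μ {x} = 0 := by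
        set q : ℝ≥0∞ := (ENNReal.ofReal (1/2)) ^ t with hq_def
        have hq1 : q < 1 :=
          ENNReal.rpow_lt_one (ENNReal.ofReal_lt_one.2 (by norm_num)) ht
        have hlim : Tendsto (fun k : ℕ => M * q ^ k) atTop (𝓝 0) := by
          have := ENNReal.Tendsto.const_mul
            (ENNReal.tendsto_pow_atTop_nhds_zero_of_lt_one hq1) (Or.inr hMtop)
          simpa using this
        have hle : ∀ k : ℕ, μ {x} ≤ M * q ^ k := by
          intro k
          have hrk : (ENNReal.ofReal ((1/2 : ℝ) ^ k)) ≠ 0 := by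
            simp only [ne_eq, ENNReal.ofReal_eq_zero, not_le]
            positivity
          have h2 := hfrost0 x hx (ENNReal.ofReal ((1/2 : ℝ) ^ k)) hrk ENNReal.ofReal_ne_top
          refine le_trans (le_trans (measure_mono ?_) h2) ?_
          · intro y hy
            simp only [mem_singleton_iff] at hy
            subst hy
            exact EMetric.mem_closedBall_self
          · rw [hq_def]
            have heq : (ENNReal.ofReal ((1/2 : ℝ) ^ k)) ^ t = ((ENNReal.ofReal (1/2)) ^ t) ^ k := by
              rw [ENNReal.ofReal_pow (by norm_num), ← ENNReal.rpow_natCast (ENNReal.ofReal (1/2)) k,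
                ← ENNReal.rpow_mul, mul_comm, ENNReal.rpow_mul, ENNReal.rpow_natCast]
            rw [heq]
        exact le_antisymm (ge_of_tendsto' hlim hle) zero_le
      have hsub : EMetric.closedBall x 0 ⊆ {x} := by
        intro y hy
        have : edist y x = 0 := le_antisymm (EMetric.mem_closedBall.1 hy) zero_le
        simpa [edist_eq_zero] using this
      exact le_trans (measure_mono hsub) (by rw [hxx]; exact zero_le)
    rcases eq_or_ne r ⊤ with rfl | hrtop
    · have : (⊤ : ℝ≥0∞) ^ t = ⊤ := ENNReal.top_rpow_of_pos ht
      rw [this, ENNReal.mul_top hM0]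
      exact le_top
    · exact hfrost0 x hx r hr0 hrtop
  have hdim : ENNReal.ofReal t ≤ dimH (A n) :=
    frostman_dimH μ (A n) (hAmeas n) t ht.le M hM0 hMtop hfrost hn
  exact le_trans hdim (dimH_mono inter_subset_left)

lemma pair_le_sq_integral {m : ℕ} (μ : Measure (Euc m)) [IsFiniteMeasure μ] {ρ : ℝ}
    (hρ : 0 < ρ) :
    (μ.prod μ) {p | dist p.1 p.2 ≤ ρ} * volume (closedBall (0 : Euc m) (ρ/2))
      ≤ ∫⁻ z, (μ (closedBall z ρ))^2 := by
  set S : Set (Euc m × Euc m) := {p | dist p.1 p.2 ≤ ρ} with hS_def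
  have hSmeas : MeasurableSet S :=
    (isClosed_le (continuous_dist.comp (continuous_fst.prodMk continuous_snd))
      continuous_const).measurableSet
  set f : Euc m × Euc m → ℝ≥0∞ := S.indicator 1 with hf_def
  have hfmeas : Measurable f := measurable_one.indicator hSmeas
  -- step 1 : μ (closedBall z ρ) = ∫⁻ u, f (z, u) ∂μ
  have h1 : ∀ z : Euc m, μ (closedBall z ρ) = ∫⁻ u, f (z, u) ∂μ := by
    intro z
    have : (fun u => f (z, u)) = (closedBall z ρ).indicator 1 := by
      funext u
      by_cases hu : u ∈ closedBall z ρ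
      · rw [indicator_of_mem hu]
        have : (z, u) ∈ S := by simpa [hS_def, dist_comm] using (mem_closedBall.1 hu)
        simp [hf_def, this]
      · rw [indicator_of_notMem hu]
        have : (z, u) ∉ S := by
          simp only [hS_def, mem_setOf_eq]
          rw [mem_closedBall] at hu
          rw [dist_comm] at hu
          exact not_le.2 (not_le.1 hu)
        simp [hf_def, this]
    rw [this, lintegral_indicator measurableSet_closedBall]
    simp
  -- step 2 : square as double integral over the product
  have h2 : ∀ z : Euc m, (μ (closedBall z ρ))^2
      = ∫⁻ p, f (z, p.1) * f (z, p.2) ∂(μ.prod μ) := by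
    intro z
    rw [sq, h1 z]
    exact (lintegral_prod_mul (μ := μ) (ν := μ) (f := fun u => f (z, u)) (g := fun u => f (z, u))
      (hfmeas.comp measurable_prodMk_left).aemeasurable
      (hfmeas.comp measurable_prodMk_left).aemeasurable).symm
  -- step 3 : swap
  have h3 : ∫⁻ z, (μ (closedBall z ρ))^2
      = ∫⁻ p, (∫⁻ z, f (z, p.1) * f (z, p.2)) ∂(μ.prod μ) := by
    simp_rw [h2]
    rw [lintegral_lintegral_swap]
    apply AEMeasurable.mul
    · exact (hfmeas.comp ((measurable_fst).prodMk (measurable_fst.comp measurable_snd))).aemeasurable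
    · exact (hfmeas.comp ((measurable_fst).prodMk (measurable_snd.comp measurable_snd))).aemeasurable
  -- step 4 : inner integral is volume of intersection of balls
  have h4 : ∀ u v : Euc m, (∫⁻ z, f (z, u) * f (z, v))
      = volume (closedBall u ρ ∩ closedBall v ρ) := by
    intro u v
    have : (fun z => f (z, u) * f (z, v))
        = (closedBall u ρ ∩ closedBall v ρ).indicator 1 := by
      funext z
      by_cases hz : z ∈ closedBall u ρ ∩ closedBall v ρ
      · have hz1 : (z, u) ∈ S := by simpa [hS_def] using mem_closedBall.1 hz.1
        have hz2 : (z, v) ∈ S := by simpa [hS_def] using mem_closedBall.1 hz.2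
        simp [hf_def, hz1, hz2, indicator_of_mem hz]
      · rw [indicator_of_notMem hz]
        rcases not_and_or.1 hz with h | h
        · have : (z, u) ∉ S := by
            simp only [hS_def, mem_setOf_eq]
            exact not_le.2 (not_le.1 (fun hc => h (mem_closedBall.2 hc)))
          simp [hf_def, this]
        · have : (z, v) ∉ S := by
            simp only [hS_def, mem_setOf_eq]
            exact not_le.2 (not_le.1 (fun hc => h (mem_closedBall.2 hc)))
          simp [hf_def, this]
    rw [this, lintegral_indicator (measurableSet_closedBall.inter measurableSet_closedBall)]
    simp
  -- step 5 : lower bound for the intersection volume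
  have h5 : ∀ p : Euc m × Euc m,
      S.indicator (fun _ => volume (closedBall (0 : Euc m) (ρ/2))) p
        ≤ volume (closedBall p.1 ρ ∩ closedBall p.2 ρ) := by
    rintro ⟨u, v⟩
    by_cases hp : (u, v) ∈ S
    · rw [indicator_of_mem hp]
      have hd : dist u v ≤ ρ := hp
      have hsub : closedBall ((2:ℝ)⁻¹ • (u + v)) (ρ/2) ⊆ closedBall u ρ ∩ closedBall v ρ := by
        intro z hz
        rw [mem_closedBall] at hz
        constructor <;> rw [mem_closedBall]
        · have h1 : dist ((2:ℝ)⁻¹ • (u + v)) u = dist u v / 2 := by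
            rw [dist_eq_norm, dist_eq_norm]
            have : (2:ℝ)⁻¹ • (u + v) - u = (2:ℝ)⁻¹ • (v - u) := by
              rw [smul_sub, smul_add]
              module
            rw [this, norm_smul, norm_sub_rev]
            simp [abs_of_pos]
            ring
          calc dist z u ≤ dist z ((2:ℝ)⁻¹ • (u + v)) + dist ((2:ℝ)⁻¹ • (u + v)) u :=
                dist_triangle _ _ _
            _ ≤ ρ/2 + dist u v / 2 := by rw [h1]; gcongr
            _ ≤ ρ/2 + ρ/2 := by linarith
            _ = ρ := by ring
        · have h1 : dist ((2:ℝ)⁻¹ • (u + v)) v = dist u v / 2 := by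
            rw [dist_eq_norm, dist_eq_norm]
            have : (2:ℝ)⁻¹ • (u + v) - v = (2:ℝ)⁻¹ • (u - v) := by
              rw [smul_sub, smul_add]
              module
            rw [this, norm_smul]
            simp [abs_of_pos]
            ring
          calc dist z v ≤ dist z ((2:ℝ)⁻¹ • (u + v)) + dist ((2:ℝ)⁻¹ • (u + v)) v :=
                dist_triangle _ _ _
            _ ≤ ρ/2 + dist u v / 2 := by rw [h1]; gcongr
            _ ≤ ρ/2 + ρ/2 := by linarith
            _ = ρ := by ring
      calc volume (closedBall (0 : Euc m) (ρ/2))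
          = volume (closedBall ((2:ℝ)⁻¹ • (u + v)) (ρ/2)) := by
            rw [Measure.addHaar_closedBall _ _ (by positivity),
              Measure.addHaar_closedBall _ _ (by positivity)]
        _ ≤ volume (closedBall u ρ ∩ closedBall v ρ) := measure_mono hsub
    · rw [indicator_of_notMem hp]
      exact zero_le
  -- assemble
  rw [h3]
  calc (μ.prod μ) S * volume (closedBall (0 : Euc m) (ρ/2))
      = ∫⁻ p, S.indicator (fun _ => volume (closedBall (0 : Euc m) (ρ/2))) p ∂(μ.prod μ) := by
        rw [lintegral_indicator_const hSmeas, mul_comm]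
    _ ≤ ∫⁻ p, (∫⁻ z, f (z, p.1) * f (z, p.2)) ∂(μ.prod μ) := by
        refine lintegral_mono fun p => ?_
        rw [h4 p.1 p.2]
        exact h5 p

lemma mconv_lower {m : ℕ} (μ : Measure (Euc m)) [IsFiniteMeasure μ]
    (ψ : Euc m → ℝ) (hcont : Continuous ψ) (hsupp : HasCompactSupport ψ) (hpos : 0 ≤ ψ)
    (x₀ : Euc m) {r₀ ε : ℝ} (hr₀ : 0 < r₀) (hε : 0 < ε)
    (hball : ∀ z ∈ closedBall x₀ r₀, ε ≤ ψ z)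
    {δ : ℝ} (hδ : 0 < δ) (x : Euc m) :
    ε * ((δ ^ m)⁻¹) * (μ (closedBall (x - δ • x₀) (δ * r₀))).toReal
      ≤ mconv μ (moll m ψ δ) x := by
  set B := closedBall (x - δ • x₀) (δ * r₀) with hB_def
  have hδm : (0:ℝ) < (δ ^ m)⁻¹ := by positivity
  have hδ' : δ⁻¹ ≠ 0 := by positivity
  have hint : Integrable (fun y => moll m ψ δ (x - y)) μ := by
    have hc : Continuous (fun y => moll m ψ δ (x - y)) := by
      unfold moll; fun_prop
    have hcs : HasCompactSupport (fun y => moll m ψ δ (x - y)) := by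
      have h1 : HasCompactSupport (fun z => (δ ^ m)⁻¹ * ψ z) := hsupp.mul_left
      have H : Euc m ≃ₜ Euc m :=
        (Homeomorph.subLeft x).trans (Homeomorph.smulOfNeZero δ⁻¹ hδ')
      exact h1.comp_homeomorph ((Homeomorph.subLeft x).trans (Homeomorph.smulOfNeZero δ⁻¹ hδ'))
    exact hc.integrable_of_hasCompactSupport hcs
  have hgeq : ∀ y, (B.indicator (fun _ => ε * (δ ^ m)⁻¹) y) ≤ moll m ψ δ (x - y) := by
    intro y
    by_cases hy : y ∈ B
    · rw [indicator_of_mem hy]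
      have h1 : δ⁻¹ • (x - y) ∈ closedBall x₀ r₀ := by
        rw [hB_def, mem_closedBall] at hy
        rw [mem_closedBall, dist_eq_norm]
        have heq : δ⁻¹ • (x - y) - x₀ = δ⁻¹ • ((x - y) - δ • x₀) := by
          match_scalars <;> field_simp
        rw [heq, norm_smul, Real.norm_eq_abs, abs_of_pos (by positivity)]
        have heq2 : ‖(x - y) - δ • x₀‖ = dist y (x - δ • x₀) := by
          rw [dist_eq_norm, norm_sub_rev]
          congr 1
          abel
        rw [heq2]
        calc δ⁻¹ * dist y (x - δ • x₀) ≤ δ⁻¹ * (δ * r₀) := by gcongr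
          _ = r₀ := by field_simp
      have hψ := hball _ h1
      unfold moll
      nlinarith
    · rw [indicator_of_notMem hy]
      unfold moll
      exact mul_nonneg hδm.le (hpos (δ⁻¹ • (x - y)))
  have hind : Integrable (B.indicator (fun _ => ε * (δ ^ m)⁻¹)) μ :=
    (integrable_const _).indicator measurableSet_closedBall
  calc ε * (δ ^ m)⁻¹ * (μ B).toReal
      = ∫ y, B.indicator (fun _ => ε * (δ ^ m)⁻¹) y ∂μ := by
        rw [integral_indicator_const _ measurableSet_closedBall, smul_eq_mul, measureReal_def]; ring
    _ ≤ ∫ y, moll m ψ δ (x - y) ∂μ := integral_mono hind hint hgeq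
    _ = mconv μ (moll m ψ δ) x := rfl

lemma energy_lt_top {X : Type*} [MetricSpace X] [SecondCountableTopology X] [MeasurableSpace X] [BorelSpace X]
    (ν : Measure (X × X)) [IsFiniteMeasure ν]
    (r₀ : ℝ) (hr₀ : 0 < r₀) (D : ℝ≥0∞) (hD : D ≠ ⊤) {s t : ℝ} (ht0 : 0 < t) (hts : t < s)
    (hbound : ∀ j : ℕ,
      ν {p | dist p.1 p.2 ≤ r₀ * (1/2)^j} ≤ D * ENNReal.ofReal (((1/2:ℝ)^j) ^ s)) :
    ∫⁻ p, edist p.1 p.2 ^ (-t) ∂ν < ⊤ := by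
  have hs0 : 0 < s := ht0.trans hts
  have hdistm : Measurable fun p : X × X => dist p.1 p.2 :=
    continuous_dist.comp (continuous_fst.prodMk continuous_snd) |>.measurable
  set g : X × X → ℝ≥0∞ := fun p => edist p.1 p.2 ^ (-t) with hg_def
  -- the diagonal is null
  have hN : ν {p : X × X | dist p.1 p.2 ≤ 0} = 0 := by
    set q : ℝ≥0∞ := ENNReal.ofReal ((1/2 : ℝ) ^ s) with hq_def
    have hq1 : q < 1 := by
      rw [hq_def]
      refine ENNReal.ofReal_lt_one.2 (Real.rpow_lt_one (by norm_num) (by norm_num) hs0)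
    have hlim : Tendsto (fun k : ℕ => D * q ^ k) atTop (𝓝 0) := by
      have := ENNReal.Tendsto.const_mul
        (ENNReal.tendsto_pow_atTop_nhds_zero_of_lt_one hq1) (Or.inr hD)
      simpa using this
    have hle : ∀ k : ℕ, ν {p : X × X | dist p.1 p.2 ≤ 0} ≤ D * q ^ k := by
      intro k
      refine le_trans (measure_mono ?_) (le_trans (hbound k) ?_)
      · intro p hp
        exact le_trans (show dist p.1 p.2 ≤ 0 from hp) (by positivity)
      · gcongr
        rw [hq_def, ← ENNReal.ofReal_pow (by positivity), ← Real.rpow_natCast ((1/2:ℝ)^s) k,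
          ← Real.rpow_natCast (1/2 : ℝ) k, ← Real.rpow_mul (by norm_num), mul_comm,
          Real.rpow_mul (by norm_num), Real.rpow_natCast]
    exact le_antisymm (ge_of_tendsto' hlim hle) zero_le
  -- annuli
  set P : ℕ → Set (X × X) :=
    fun j => {p | r₀ * (1/2)^(j+1) < dist p.1 p.2 ∧ dist p.1 p.2 ≤ r₀ * (1/2)^j} with hP_def
  have hPmeas : ∀ j, MeasurableSet (P j) := fun j =>
    ((measurableSet_lt measurable_const hdistm).inter (measurableSet_le hdistm measurable_const))
  set T : Set (X × X) := {p | r₀ < dist p.1 p.2} with hT_def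
  have hTmeas : MeasurableSet T := measurableSet_lt measurable_const hdistm
  have hcover : Tᶜ ⊆ {p : X × X | dist p.1 p.2 ≤ 0} ∪ ⋃ j, P j := by
    intro p hp
    simp only [hT_def, mem_compl_iff, mem_setOf_eq, not_lt] at hp
    rcases le_or_gt (dist p.1 p.2) 0 with h0 | h0
    · exact Or.inl h0
    · refine Or.inr ?_
      have hex : ∃ k : ℕ, r₀ * (1/2)^(k+1) < dist p.1 p.2 := by
        obtain ⟨n, hn⟩ := exists_pow_lt_of_lt_one (div_pos h0 hr₀) (by norm_num : (1/2:ℝ) < 1)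
        refine ⟨n, ?_⟩
        have hpow : (0:ℝ) < (1/2)^n := by positivity
        have h3 : r₀ * ((1/2:ℝ)^n) < dist p.1 p.2 := by
          have h5 := (lt_div_iff₀ hr₀).1 hn
          linarith
        have h4 : r₀ * (1/2:ℝ)^(n+1) ≤ r₀ * ((1/2:ℝ)^n) := by
          have h6 : (1/2:ℝ)^(n+1) ≤ (1/2)^n := by
            rw [pow_succ]
            nlinarith
          nlinarith
        linarith
      set j := Nat.find hex with hj_def
      have hj1 : r₀ * (1/2)^(j+1) < dist p.1 p.2 := Nat.find_spec hex
      have hj2 : dist p.1 p.2 ≤ r₀ * (1/2)^j := by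
        rcases Nat.eq_zero_or_pos j with hj0 | hjpos
        · rw [hj0, pow_zero, mul_one]; exact hp
        · have := Nat.find_min hex (Nat.sub_lt hjpos one_pos)
          push_neg at this
          have heq : j - 1 + 1 = j := Nat.succ_pred_eq_of_pos hjpos
          rwa [heq] at this
      exact mem_iUnion.2 ⟨j, hj1, hj2⟩
  -- split the integral
  have hsplit : ∫⁻ p, g p ∂ν = (∫⁻ p in T, g p ∂ν) + ∫⁻ p in Tᶜ, g p ∂ν :=
    (lintegral_add_compl g hTmeas).symm
  have hT_bound : ∫⁻ p in T, g p ∂ν ≤ (ENNReal.ofReal r₀) ^ (-t) * ν univ := by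
    have : ∀ p ∈ T, g p ≤ (ENNReal.ofReal r₀) ^ (-t) := by
      intro p hp
      have h1 : ENNReal.ofReal r₀ ≤ edist p.1 p.2 := by
        rw [edist_dist]
        exact ENNReal.ofReal_le_ofReal (le_of_lt hp)
      have hgp : g p = (edist p.1 p.2 ^ t)⁻¹ := by
        simp only [hg_def, ENNReal.rpow_neg]
      rw [hgp, ENNReal.rpow_neg]
      exact ENNReal.inv_le_inv.2 (ENNReal.rpow_le_rpow h1 ht0.le)
    calc ∫⁻ p in T, g p ∂ν ≤ ∫⁻ _ in T, (ENNReal.ofReal r₀) ^ (-t) ∂ν :=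
          setLIntegral_mono (by fun_prop) this
      _ = (ENNReal.ofReal r₀) ^ (-t) * ν T := by rw [setLIntegral_const]
      _ ≤ _ := mul_le_mul_right (measure_mono (subset_univ _)) _
  have hP_bound : ∀ j : ℕ, ∫⁻ p in P j, g p ∂ν ≤
      ((ENNReal.ofReal (r₀/2)) ^ (-t) * D) * (ENNReal.ofReal ((1/2:ℝ) ^ (s - t))) ^ j := by
    intro j
    have hgP : ∀ p ∈ P j, g p ≤ (ENNReal.ofReal (r₀ * (1/2)^(j+1))) ^ (-t) := by
      intro p hp
      have h1 : ENNReal.ofReal (r₀ * (1/2)^(j+1)) ≤ edist p.1 p.2 := by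
        rw [edist_dist]
        exact ENNReal.ofReal_le_ofReal (le_of_lt hp.1)
      have hgp : g p = (edist p.1 p.2 ^ t)⁻¹ := by
        simp only [hg_def, ENNReal.rpow_neg]
      rw [hgp, ENNReal.rpow_neg]
      exact ENNReal.inv_le_inv.2 (ENNReal.rpow_le_rpow h1 ht0.le)
    have hνP : ν (P j) ≤ D * ENNReal.ofReal (((1/2:ℝ)^j) ^ s) :=
      le_trans (measure_mono (fun p hp => hp.2)) (hbound j)
    calc ∫⁻ p in P j, g p ∂ν
        ≤ ∫⁻ _ in P j, (ENNReal.ofReal (r₀ * (1/2)^(j+1))) ^ (-t) ∂ν :=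
          setLIntegral_mono (by fun_prop) hgP
      _ = (ENNReal.ofReal (r₀ * (1/2)^(j+1))) ^ (-t) * ν (P j) := by rw [setLIntegral_const]
      _ ≤ (ENNReal.ofReal (r₀ * (1/2)^(j+1))) ^ (-t) * (D * ENNReal.ofReal (((1/2:ℝ)^j) ^ s)) := by
          gcongr
      _ = ((ENNReal.ofReal (r₀/2)) ^ (-t) * D) * (ENNReal.ofReal ((1/2:ℝ) ^ (s - t))) ^ j := by
          rw [show r₀ * (1/2:ℝ)^(j+1) = (r₀/2) * (1/2)^j by ring,
            ENNReal.ofReal_mul (by positivity),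
            ENNReal.mul_rpow_of_ne_zero
              (by simp only [ne_eq, ENNReal.ofReal_eq_zero, not_le]; positivity)
              (by simp only [ne_eq, ENNReal.ofReal_eq_zero, not_le]; positivity) (-t)]
          rw [ENNReal.ofReal_rpow_of_pos (show (0:ℝ) < (1/2:ℝ)^j by positivity)]
          have hmerge : ENNReal.ofReal (((1/2:ℝ)^j) ^ (-t)) * ENNReal.ofReal (((1/2:ℝ)^j) ^ s)
              = (ENNReal.ofReal ((1/2:ℝ) ^ (s - t))) ^ j := by
            rw [← ENNReal.ofReal_mul (by positivity)]
            have hreal : ((1/2:ℝ)^j) ^ (-t) * ((1/2:ℝ)^j) ^ s = ((1/2:ℝ) ^ (s-t)) ^ j := by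
              rw [← Real.rpow_natCast (1/2:ℝ) j, ← Real.rpow_mul (by norm_num),
                ← Real.rpow_mul (by norm_num), ← Real.rpow_add (by norm_num),
                ← Real.rpow_natCast ((1/2:ℝ) ^ (s-t)) j, ← Real.rpow_mul (by norm_num)]
              congr 1
              ring
            rw [hreal, ENNReal.ofReal_pow (by positivity)]
          rw [show (ENNReal.ofReal (r₀/2))^(-t) * ENNReal.ofReal (((1/2:ℝ)^j)^(-t))
              * (D * ENNReal.ofReal (((1/2:ℝ)^j)^s))
              = ((ENNReal.ofReal (r₀/2))^(-t) * D)
                * (ENNReal.ofReal (((1/2:ℝ)^j)^(-t)) * ENNReal.ofReal (((1/2:ℝ)^j)^s)) from by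
            ring, hmerge]
  -- sum the annuli
  set q : ℝ≥0∞ := ENNReal.ofReal ((1/2:ℝ) ^ (s - t)) with hq2_def
  have hq2 : q < 1 :=
    ENNReal.ofReal_lt_one.2 (Real.rpow_lt_one (by norm_num) (by norm_num) (by linarith))
  have hK : (ENNReal.ofReal (r₀/2)) ^ (-t) * D ≠ ⊤ := by
    apply ENNReal.mul_ne_top _ hD
    rw [ENNReal.rpow_neg]
    simp only [ne_eq, ENNReal.inv_eq_top]
    intro h
    have : ENNReal.ofReal (r₀/2) ≠ 0 := by
      simp only [ne_eq, ENNReal.ofReal_eq_zero, not_le]; positivity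
    exact absurd h ((ENNReal.rpow_pos (pos_iff_ne_zero.2 this) ENNReal.ofReal_ne_top).ne')
  have hTc_bound : ∫⁻ p in Tᶜ, g p ∂ν ≤
      ((ENNReal.ofReal (r₀/2)) ^ (-t) * D) * (1 - q)⁻¹ := by
    calc ∫⁻ p in Tᶜ, g p ∂ν
        ≤ ∫⁻ p in ({p : X × X | dist p.1 p.2 ≤ 0} ∪ ⋃ j, P j), g p ∂ν :=
          lintegral_mono_set hcover
      _ ≤ (∫⁻ p in {p : X × X | dist p.1 p.2 ≤ 0}, g p ∂ν) + ∫⁻ p in ⋃ j, P j, g p ∂ν :=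
          lintegral_union_le _ _ _
      _ ≤ 0 + ∑' j, ∫⁻ p in P j, g p ∂ν := by
          gcongr
          · rw [setLIntegral_measure_zero _ _ hN]
          · exact lintegral_iUnion_le _ _
      _ ≤ ∑' j, ((ENNReal.ofReal (r₀/2)) ^ (-t) * D) * q ^ j := by
          rw [zero_add]
          exact ENNReal.tsum_le_tsum hP_bound
      _ = ((ENNReal.ofReal (r₀/2)) ^ (-t) * D) * (1 - q)⁻¹ := by
          rw [ENNReal.tsum_mul_left, ENNReal.tsum_geometric]
  rw [hsplit]
  apply ENNReal.add_lt_top.2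
  constructor
  · apply lt_of_le_of_lt hT_bound
    apply ENNReal.mul_lt_top _ (measure_lt_top _ _)
    rw [ENNReal.rpow_neg]
    simp only [ENNReal.inv_lt_top]
    apply ENNReal.rpow_pos _ ENNReal.ofReal_ne_top
    simp only [pos_iff_ne_zero, ne_eq, ENNReal.ofReal_eq_zero, not_le]
    positivity
  · apply lt_of_le_of_lt hTc_bound
    apply ENNReal.mul_lt_top hK.lt_top
    simp only [ENNReal.inv_lt_top]
    exact tsub_pos_iff_lt.2 hq2

lemma pair_measure_decay {m : ℕ} (hm : 0 < m) (μ : Measure (Euc m)) [IsFiniteMeasure μ]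
    (ψ : Euc m → ℝ) (hcont : Continuous ψ) (hsupp : HasCompactSupport ψ) (hpos : 0 ≤ ψ)
    (x₀ : Euc m) {r₀ ε : ℝ} (hr₀ : 0 < r₀) (hε : 0 < ε)
    (hball : ∀ z ∈ closedBall x₀ r₀, ε ≤ ψ z)
    (s : ℝ) (C : ℝ)
    (hgrowth : ∀ j : ℕ,
      (∫⁻ x, ENNReal.ofReal ((mconv μ (moll m ψ ((1 / 2 : ℝ) ^ j)) x) ^ 2)) ≤
        ENNReal.ofReal (C * ((1 / 2 : ℝ) ^ j) ^ (s - (m : ℝ)))) :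
    ∃ D : ℝ≥0∞, D ≠ ⊤ ∧ ∀ j : ℕ,
      (μ.prod μ) {p | dist p.1 p.2 ≤ r₀ * (1/2)^j} ≤ D * ENNReal.ofReal (((1/2:ℝ)^j) ^ s) := by
  set κ : ℝ≥0∞ := volume (ball (0 : Euc m) 1) with hκ_def
  have hκ0 : κ ≠ 0 := (measure_ball_pos _ _ one_pos).ne'
  have hκtop : κ ≠ ⊤ := measure_ball_lt_top.ne
  refine ⟨ENNReal.ofReal (|C| / ((r₀/2)^m * ε^2)) * κ⁻¹,
    ENNReal.mul_ne_top ENNReal.ofReal_ne_top (ENNReal.inv_ne_top.2 hκ0), fun j => ?_⟩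
  set δ : ℝ := (1/2:ℝ)^j with hδ_def
  have hδ : 0 < δ := by positivity
  set ρ : ℝ := δ * r₀ with hρ_def
  have hρ : 0 < ρ := by positivity
  rw [show r₀ * δ = ρ from by rw [hρ_def]; ring]
  obtain ⟨c, hc_def, hc⟩ : ∃ c : ℝ, c = ε * (δ ^ m)⁻¹ ∧ 0 < c :=
    ⟨_, rfl, by positivity⟩
  set X : ℝ≥0∞ := (μ.prod μ) {p | dist p.1 p.2 ≤ ρ} with hX_def
  -- step 1 : pointwise bound
  have h1 : ∀ x : Euc m, ENNReal.ofReal (c^2) * (μ (closedBall (x - δ • x₀) ρ))^2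
      ≤ ENNReal.ofReal ((mconv μ (moll m ψ δ) x) ^ 2) := by
    intro x
    have ha := mconv_lower μ ψ hcont hsupp hpos x₀ hr₀ hε hball hδ x
    rw [← hc_def] at ha
    have ha0 : 0 ≤ c * (μ (closedBall (x - δ • x₀) (δ * r₀))).toReal := by positivity
    have hsq : (c * (μ (closedBall (x - δ • x₀) (δ * r₀))).toReal)^2
        ≤ (mconv μ (moll m ψ δ) x) ^ 2 := by
      apply pow_le_pow_left₀ ha0
      exact ha
    refine le_trans (le_of_eq ?_) (ENNReal.ofReal_le_ofReal hsq)
    have hcd : (c * (μ (closedBall (x - δ • x₀) (δ * r₀))).toReal)^2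
        = c^2 * ((μ (closedBall (x - δ • x₀) (δ * r₀))).toReal)^2 := by ring
    rw [hρ_def, hcd, ENNReal.ofReal_mul (by positivity),
      ENNReal.ofReal_pow ENNReal.toReal_nonneg, ENNReal.ofReal_toReal (measure_ne_top μ _)]
  -- step 2 : integrate
  have h2 : ENNReal.ofReal (c^2) * ∫⁻ x, (μ (closedBall (x - δ • x₀) ρ))^2
      ≤ ENNReal.ofReal (|C| * δ ^ (s - (m:ℝ))) := by
    rw [← lintegral_const_mul' _ _ ENNReal.ofReal_ne_top]
    refine le_trans (lintegral_mono h1) (le_trans (hgrowth j) (ENNReal.ofReal_le_ofReal ?_))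
    have hdpos : (0:ℝ) ≤ δ ^ (s - (m:ℝ)) := Real.rpow_nonneg hδ.le _
    nlinarith [le_abs_self C]
  -- step 3 : translate
  have h3 : ∫⁻ x, (μ (closedBall (x - δ • x₀) ρ))^2 = ∫⁻ z, (μ (closedBall z ρ))^2 := by
    simp_rw [sub_eq_add_neg]
    exact lintegral_add_right_eq_self (fun z => (μ (closedBall z ρ))^2) (-(δ • x₀))
  -- step 4 : combine with pair_le_sq_integral
  have h4 : X * (volume (closedBall (0 : Euc m) (ρ/2)) * ENNReal.ofReal (c^2))
      ≤ ENNReal.ofReal (|C| * δ ^ (s - (m:ℝ))) := by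
    rw [← mul_assoc]
    calc X * volume (closedBall (0 : Euc m) (ρ/2)) * ENNReal.ofReal (c^2)
        ≤ (∫⁻ z, (μ (closedBall z ρ))^2) * ENNReal.ofReal (c^2) := by
          gcongr
          exact pair_le_sq_integral μ hρ
      _ = ENNReal.ofReal (c^2) * ∫⁻ x, (μ (closedBall (x - δ • x₀) ρ))^2 := by
          rw [h3, mul_comm]
      _ ≤ _ := h2
  -- step 5 : volume of the small ball
  have h5 : volume (closedBall (0 : Euc m) (ρ/2)) = ENNReal.ofReal ((ρ/2)^m) * κ := by
    rw [Measure.addHaar_closedBall _ _ (by positivity)]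
    congr 2
    simp [finrank_euclideanSpace_fin]
  obtain ⟨a, ha_def, ha_pos⟩ : ∃ a : ℝ, a = (ρ/2)^m * c^2 ∧ 0 < a :=
    ⟨_, rfl, by positivity⟩
  have h6 : X * (ENNReal.ofReal a * κ) ≤ ENNReal.ofReal (|C| * δ ^ (s - (m:ℝ))) := by
    refine le_trans (le_of_eq ?_) h4
    rw [h5, ha_def, ENNReal.ofReal_mul (by positivity)]
    ring
  -- step 6 : divide
  have hA0 : ENNReal.ofReal a * κ ≠ 0 := by
    apply mul_ne_zero _ hκ0
    simp only [ne_eq, ENNReal.ofReal_eq_zero, not_le]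
    exact ha_pos
  have hAtop : ENNReal.ofReal a * κ ≠ ⊤ := ENNReal.mul_ne_top ENNReal.ofReal_ne_top hκtop
  have h7 : X ≤ ENNReal.ofReal (|C| * δ ^ (s - (m:ℝ))) / (ENNReal.ofReal a * κ) :=
    (ENNReal.le_div_iff_mul_le (Or.inl hA0) (Or.inl hAtop)).2 h6
  refine le_trans h7 (le_of_eq ?_)
  rw [div_eq_mul_inv, ENNReal.mul_inv (Or.inl (by
      simp only [ne_eq, ENNReal.ofReal_eq_zero, not_le]; exact ha_pos)) (Or.inl ENNReal.ofReal_ne_top),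
    ← mul_assoc, ← ENNReal.ofReal_inv_of_pos ha_pos,
    ← ENNReal.ofReal_mul (by positivity)]
  have hreal : |C| * δ ^ (s - (m:ℝ)) * a⁻¹ = |C| / ((r₀/2)^m * ε^2) * δ ^ s := by
    have hd : δ ^ (s - (m:ℝ)) = δ ^ s / δ ^ m := by
      rw [Real.rpow_sub hδ, Real.rpow_natCast]
    rw [hd, ha_def, hρ_def, hc_def]
    field_simp
    ring
  rw [hreal, ENNReal.ofReal_mul (by positivity)]
  ring

end AuxLemmasForMainProof

/-- **Lemma (L² growth of mollifications bounds the dimension of the support).**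
Let `μ` be a nontrivial finite Borel measure on `ℝᵐ`, let `ψ` be a fixed nonnegative
compactly supported smooth function, not identically zero, and for `δ_j = 2^{-j}` set
`ψ_{δ_j}(x) = δ_j^{-m} ψ(x/δ_j)`. If `‖μ ∗ ψ_{δ_j}‖₂² ≤ C δ_j^{s-m}` for some
`0 < s < m`, a constant `C` and all `j`, then `dim_H (spt μ) ≥ s`. -/
theorem dimH_support_ge_of_L2_mollification_bound
    (m : ℕ) (hm : 0 < m) (μ : Measure (Euc m)) (hfin : IsFiniteMeasure μ) (hμ : μ ≠ 0)
    (ψ : Euc m → ℝ) (hsmooth : ContDiff ℝ ((⊤ : ℕ∞) : WithTop ℕ∞) ψ)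
    (hsupp : HasCompactSupport ψ) (hpos : 0 ≤ ψ) (hne : ψ ≠ 0)
    (s : ℝ) (hs0 : 0 < s) (hsm : s < m) (C : ℝ)
    (hgrowth : ∀ j : ℕ,
      (∫⁻ x, ENNReal.ofReal ((mconv μ (moll m ψ ((1 / 2 : ℝ) ^ j)) x) ^ 2)) ≤
        ENNReal.ofReal (C * ((1 / 2 : ℝ) ^ j) ^ (s - (m : ℝ)))) :
    ENNReal.ofReal s ≤ dimH (measSupport μ) := by
  haveI := hfin
  have hcont : Continuous ψ := hsmooth.continuous
  obtain ⟨x₀, hx₀⟩ : ∃ x₀, ψ x₀ ≠ 0 := Function.ne_iff.1 hne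
  have hψx₀ : 0 < ψ x₀ := lt_of_le_of_ne (hpos x₀) (Ne.symm hx₀)
  obtain ⟨r₁, hr₁, hball'⟩ : ∃ r₁ > 0, ∀ z, dist z x₀ < r₁ → ψ x₀ / 2 < ψ z := by
    obtain ⟨r₁, hr₁, h⟩ := Metric.continuousAt_iff.1 hcont.continuousAt
      (ε := ψ x₀ / 2) (half_pos hψx₀)
    refine ⟨r₁, hr₁, fun z hz => ?_⟩
    have := h hz
    rw [Real.dist_eq, abs_lt] at this
    linarith [this.1]
  set r₀ : ℝ := r₁ / 2 with hr₀_def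
  have hr₀ : 0 < r₀ := by positivity
  set ε : ℝ := ψ x₀ / 2 with hε_def
  have hε : 0 < ε := half_pos hψx₀
  have hball : ∀ z ∈ closedBall x₀ r₀, ε ≤ ψ z := by
    intro z hz
    have : dist z x₀ < r₁ := lt_of_le_of_lt (mem_closedBall.1 hz) (by linarith)
    exact (hball' z this).le
  obtain ⟨D, hD, hbound⟩ := pair_measure_decay hm μ ψ hcont hsupp hpos x₀ hr₀ hε hball s C hgrowth
  have key : ∀ t : ℝ, 0 < t → t < s → ENNReal.ofReal t ≤ dimH (measSupport μ) := by
    intro t ht0 hts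
    have hE : ∫⁻ p, edist p.1 p.2 ^ (-t) ∂(μ.prod μ) < ⊤ :=
      energy_lt_top (μ.prod μ) r₀ hr₀ D hD ht0 hts hbound
    exact dimH_ge_of_energy μ hμ t ht0 hE
  by_contra hcon
  push_neg at hcon
  have hdtop : dimH (measSupport μ) ≠ ⊤ := ne_top_of_lt hcon
  set d : ℝ := (dimH (measSupport μ)).toReal with hd_def
  have hd0 : 0 ≤ d := ENNReal.toReal_nonneg
  have hd_lt : d < s := by
    have := (ENNReal.toReal_lt_toReal hdtop ENNReal.ofReal_ne_top).2 hcon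
    rwa [ENNReal.toReal_ofReal hs0.le] at this
  set t : ℝ := (d + s)/2 with ht_def
  have ht0 : 0 < t := by positivity
  have hts : t < s := by rw [ht_def]; linarith
  have hkey := key t ht0 hts
  have hlt : dimH (measSupport μ) < ENNReal.ofReal t := by
    rw [← ENNReal.ofReal_toReal hdtop]
    refine (ENNReal.ofReal_lt_ofReal_iff ht0).2 ?_
    rw [ht_def, ← hd_def]
    linarith
  exact absurd hkey (not_le.2 hlt)
end

section
/- Let 0 < m < n. Define a metric d on G(n,m) by d(V,W) = min{‖v − w‖_m, ‖v + w‖_m}, where v and w are any unit simple m-vectors representing V and W respectively (this is independent of the choice of representatives). Then d is bilipschitz-equivalent to the projection metric: there exist constants 0 < c ≤ C < ∞ (depending only on n and m) such that c · d(V,W) ≤ ‖π_V − π_W‖ ≤ C · d(V,W) for all V, W ∈ G(n,m). -/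
open MeasureTheory Metric Set Filter
open scoped ENNReal NNReal Topology

section Helpers

open Finset Equiv Matrix
open scoped RealInnerProductSpace

theorem my_det_sum_funcs {R : Type*} [CommRing R] {m n : ℕ}
    (E F : Matrix (Fin m) (Fin n) R) :
    (E * Fᵀ).det = ∑ φ : Fin m → Fin n,
      (E.submatrix id φ).det * ∏ i, F i (φ i) := by
  have h1 : (E * Fᵀ).det
      = ∑ φ : Fin m → Fin n, ∑ σ : Perm (Fin m),
          ((Perm.sign σ : ℤ) : R) * ∏ i, (E (σ i) (φ i) * F i (φ i)) := by
    simp only [Matrix.det_apply', Matrix.mul_apply, Matrix.transpose_apply,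
      Finset.prod_univ_sum, Finset.mul_sum, Fintype.piFinset_univ]
    rw [Finset.sum_comm]
  rw [h1]
  refine Finset.sum_congr rfl fun φ _ => ?_
  rw [Matrix.det_apply', Finset.sum_mul]
  refine Finset.sum_congr rfl fun σ _ => ?_
  rw [Finset.prod_mul_distrib]
  simp [Matrix.submatrix_apply, mul_assoc]

theorem my_cauchy_binet {R : Type*} [CommRing R] {m n : ℕ}
    (E F : Matrix (Fin m) (Fin n) R) :
    (E * Fᵀ).det = ∑ I : {s : Finset (Fin n) // s.card = m},
      (E.submatrix id (fun j => (I.1.orderIsoOfFin I.2 j : Fin n))).det *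
      (F.submatrix id (fun j => (I.1.orderIsoOfFin I.2 j : Fin n))).det := by
  rw [my_det_sum_funcs]
  -- restrict to injective functions
  have h2 : ∑ φ : Fin m → Fin n, (E.submatrix id φ).det * ∏ i, F i (φ i)
      = ∑ φ ∈ Finset.univ.filter (fun φ : Fin m → Fin n => Function.Injective φ),
          (E.submatrix id φ).det * ∏ i, F i (φ i) := by
    refine (Finset.sum_subset (Finset.filter_subset _ _) fun φ _ hφ => ?_).symm
    simp only [Finset.mem_filter, Finset.mem_univ, true_and] at hφ
    obtain ⟨a, b, hab, hne⟩ : ∃ a b, φ a = φ b ∧ a ≠ b := by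
      simpa [Function.Injective, not_forall] using hφ
    have : (E.submatrix id φ).det = 0 :=
      Matrix.det_zero_of_column_eq hne (fun k => by simp [Matrix.submatrix_apply, hab])
    rw [this, zero_mul]
  rw [h2]
  -- sum over pairs (I, σ)
  have h3 : ∀ I : {s : Finset (Fin n) // s.card = m},
      (E.submatrix id (fun j => (I.1.orderIsoOfFin I.2 j : Fin n))).det *
      (F.submatrix id (fun j => (I.1.orderIsoOfFin I.2 j : Fin n))).det
      = ∑ σ : Perm (Fin m),
          (E.submatrix id (fun j => (I.1.orderIsoOfFin I.2 (σ j) : Fin n))).det *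
          ∏ i, F i (I.1.orderIsoOfFin I.2 (σ i) : Fin n) := by
    intro I
    set g : Fin m → Fin n := fun j => (I.1.orderIsoOfFin I.2 j : Fin n) with hg
    have key : ∀ σ : Perm (Fin m),
        (E.submatrix id (fun j => g (σ j))).det
          = ((Perm.sign σ : ℤ) : R) * (E.submatrix id g).det := by
      intro σ
      have : (E.submatrix id (fun j => g (σ j))) = (E.submatrix id g).submatrix id σ := by
        ext i j; simp [Matrix.submatrix_apply]
      rw [this, Matrix.det_permute']
    calc (E.submatrix id g).det * (F.submatrix id g).det
        = (E.submatrix id g).det * ((F.submatrix id g)ᵀ).det := by rw [Matrix.det_transpose]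
      _ = (E.submatrix id g).det * ∑ σ : Perm (Fin m),
            ((Perm.sign σ : ℤ) : R) * ∏ i, F i (g (σ i)) := by
          congr 1
          rw [Matrix.det_apply']
          refine Finset.sum_congr rfl fun σ _ => ?_
          simp [Matrix.transpose_apply, Matrix.submatrix_apply]
      _ = ∑ σ : Perm (Fin m),
            (E.submatrix id (fun j => g (σ j))).det * ∏ i, F i (g (σ i)) := by
          rw [Finset.mul_sum]
          refine Finset.sum_congr rfl fun σ _ => ?_
          rw [key σ]; ring
  simp_rw [h3]
  rw [← Fintype.sum_prod_type']
  refine (Finset.sum_bij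
      (i := fun (p : {s : Finset (Fin n) // s.card = m} × Perm (Fin m)) (_ : p ∈ Finset.univ) =>
        (fun j => (p.1.1.orderIsoOfFin p.1.2 (p.2 j) : Fin n))) ?_ ?_ ?_ ?_).symm
  · intro p _
    simp only [Finset.mem_filter, Finset.mem_univ, true_and]
    intro a b hab
    exact p.2.injective (by
      have := Subtype.coe_injective hab
      exact (p.1.1.orderIsoOfFin p.1.2).injective this)
  · -- injectivity
    intro p hp q hq hfun
    have himg : ∀ (r : {s : Finset (Fin n) // s.card = m}) (σ : Perm (Fin m)),
        Finset.image (fun j => (r.1.orderIsoOfFin r.2 (σ j) : Fin n)) Finset.univ = r.1 := by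
      intro r σ
      apply Finset.ext
      intro x
      simp only [Finset.mem_image, Finset.mem_univ, true_and]
      constructor
      · rintro ⟨j, rfl⟩; exact (r.1.orderIsoOfFin r.2 (σ j)).2
      · intro hx
        refine ⟨σ.symm ((r.1.orderIsoOfFin r.2).symm ⟨x, hx⟩), ?_⟩
        simp
    have hI : p.1 = q.1 := by
      apply Subtype.ext
      rw [← himg p.1 p.2, ← himg q.1 q.2]
      exact Finset.image_congr (fun j _ => congrFun hfun j)
    obtain ⟨⟨I, hI1⟩, σ⟩ := p
    obtain ⟨⟨J, hJ1⟩, τ⟩ := q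
    have hIJ : I = J := congrArg Subtype.val hI
    subst hIJ
    simp only [Prod.mk.injEq, Subtype.mk.injEq, true_and]
    ext j
    have h := congrFun hfun j
    simp only at h
    have h2 := (I.orderIsoOfFin hI1).injective (Subtype.coe_injective h)
    exact congrArg Fin.val h2
  · -- surjectivity
    intro ψ hψ
    simp only [Finset.mem_filter, Finset.mem_univ, true_and] at hψ
    have hcard : (Finset.image ψ Finset.univ).card = m := by
      rw [Finset.card_image_of_injective _ hψ, Finset.card_univ, Fintype.card_fin]
    set I : {s : Finset (Fin n) // s.card = m} := ⟨Finset.image ψ Finset.univ, hcard⟩ with hIdef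
    have hmem : ∀ j, ψ j ∈ I.1 := fun j => Finset.mem_image_of_mem ψ (Finset.mem_univ j)
    set τ : Fin m → Fin m := fun j => (I.1.orderIsoOfFin I.2).symm ⟨ψ j, hmem j⟩ with hτ
    have hτinj : Function.Injective τ := by
      intro a b hab
      apply hψ
      have h1 : (⟨ψ a, hmem a⟩ : {x // x ∈ I.1}) = ⟨ψ b, hmem b⟩ :=
        (I.1.orderIsoOfFin I.2).symm.injective hab
      exact congrArg Subtype.val h1
    have hτbij : Function.Bijective τ := Finite.injective_iff_bijective.mp hτinj
    refine ⟨⟨I, Equiv.ofBijective τ hτbij⟩, Finset.mem_univ _, ?_⟩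
    funext j
    show ((I.1.orderIsoOfFin I.2) (τ j) : Fin n) = ψ j
    rw [hτ]
    simp
  · intro p _
    rfl

theorem wedge_apply {n m : ℕ} (u : Fin m → Euc n) (I : {s : Finset (Fin n) // s.card = m}) :
    wedge u I = (Matrix.of fun i j => u i ((I.1.orderIsoOfFin I.2 j : Fin n))).det := rfl

theorem inner_wedge {n m : ℕ} (e f : Fin m → Euc n) :
    ⟪wedge e, wedge f⟫ = (Matrix.of fun i j => (⟪e i, f j⟫ : ℝ)).det := by
  have hEF : (Matrix.of fun i j => (⟪e i, f j⟫ : ℝ))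
      = (Matrix.of fun (i : Fin m) (k : Fin n) => e i k) *
        (Matrix.of fun (j : Fin m) (k : Fin n) => f j k)ᵀ := by
    ext i j
    simp [Matrix.mul_apply, PiLp.inner_apply, RCLike.inner_apply, conj_trivial]
    exact Finset.sum_congr rfl fun _ _ => mul_comm _ _
  rw [hEF, my_cauchy_binet, PiLp.inner_apply]
  refine Finset.sum_congr rfl fun I _ => ?_
  rw [wedge_apply, wedge_apply]
  simp [RCLike.inner_apply, conj_trivial]
  rw [mul_comm]; rfl

end Helpers

section Helpers2

open Finset Equiv Matrix
open scoped RealInnerProductSpace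

theorem min_sq_eq {a b : ℝ} (ha : 0 ≤ a) (hb : 0 ≤ b) :
    min a b ^ 2 = min (a ^ 2) (b ^ 2) := by
  rcases le_total a b with h | h
  · rw [min_eq_left h, min_eq_left (by nlinarith)]
  · rw [min_eq_right h, min_eq_right (by nlinarith)]

theorem min_norm_sq_eq {E : Type*} [NormedAddCommGroup E] [InnerProductSpace ℝ E]
    {v w : E} (hv : ‖v‖ = 1) (hw : ‖w‖ = 1) :
    min ‖v - w‖ ‖v + w‖ ^ 2 = 2 - 2 * |⟪v, w⟫| := by
  have h1 : ‖v - w‖ ^ 2 = 2 - 2 * ⟪v, w⟫ := by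
    rw [norm_sub_sq_real, hv, hw]; ring
  have h2 : ‖v + w‖ ^ 2 = 2 + 2 * ⟪v, w⟫ := by
    rw [norm_add_sq_real, hv, hw]; ring
  rw [min_sq_eq (norm_nonneg _) (norm_nonneg _), h1, h2]
  rcases le_total 0 (⟪v, w⟫ : ℝ) with h | h
  · rw [abs_of_nonneg h, min_eq_left (by linarith)]
  · rw [abs_of_nonpos h, min_eq_right (by linarith)]; ring

theorem my_sum_eigenvalues {m : ℕ} {B : Matrix (Fin m) (Fin m) ℝ} (hB : B.IsHermitian) :
    ∑ i, hB.eigenvalues i = B.trace := by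
  have h := hB.spectral_theorem
  have h2 : B.trace = (Matrix.diagonal (RCLike.ofReal ∘ hB.eigenvalues) :
      Matrix (Fin m) (Fin m) ℝ).trace := by
    conv_lhs => rw [h]
    simp only [Unitary.conjStarAlgAut_apply, Unitary.coe_star]
    rw [Matrix.trace_mul_cycle]
    have h3 : (star (hB.eigenvectorUnitary : Matrix (Fin m) (Fin m) ℝ)) *
        (hB.eigenvectorUnitary : Matrix (Fin m) (Fin m) ℝ) = 1 :=
      (Matrix.mem_unitaryGroup_iff').mp hB.eigenvectorUnitary.2
    rw [h3, Matrix.one_mul]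
  rw [h2, Matrix.trace_diagonal]
  simp

theorem exists_good_frame {n m : ℕ} (V : Grass n m) (v : Lam n m)
    (hv : ∃ u : Fin m → Euc n, (∀ i, u i ∈ V.1) ∧
          Submodule.span ℝ (Set.range u) = V.1 ∧ wedge u = v)
    (hv1 : ‖v‖ = 1) :
    ∃ e : Fin m → Euc n, Orthonormal ℝ e ∧ (∀ i, e i ∈ V.1) ∧
      (∀ x : Euc n, projCLM V.1 x = ∑ i, ⟪e i, x⟫ • e i) ∧
      ∃ c : ℝ, |c| = 1 ∧ v = c • wedge e := by
  obtain ⟨u, huV, -, huw⟩ := hv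
  let b : OrthonormalBasis (Fin m) ℝ V.1 :=
    (stdOrthonormalBasis ℝ V.1).reindex (finCongr V.2)
  set e : Fin m → Euc n := fun i => (b i : Euc n) with he_def
  have hb := b.orthonormal
  have he : Orthonormal ℝ e := by
    refine ⟨fun i => ?_, fun i j hij => ?_⟩
    · rw [← hb.1 i]; rfl
    · rw [← hb.2 hij]; rfl
  have hproj : ∀ x : Euc n, projCLM V.1 x = ∑ i, ⟪e i, x⟫ • e i := by
    intro x
    have h0 := b.orthogonalProjectionOnto_apply_eq_sum x
    have h1 : projCLM V.1 x = ((V.1.orthogonalProjectionOnto x : V.1) : Euc n) := rfl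
    rw [h1, h0]
    push_cast
    rfl
  have hexp : ∀ i, u i = ∑ k, ⟪e k, u i⟫ • e k := by
    intro i
    have h1 : projCLM V.1 (u i) = u i := projCLM_apply_of_mem (huV i)
    have h2 := hproj (u i)
    rw [h1] at h2
    exact h2
  set C : Matrix (Fin m) (Fin m) ℝ := Matrix.of fun i k => ⟪e k, u i⟫ with hC
  have hwu : wedge u = C.det • wedge e := by
    apply PiLp.ext
    intro I
    rw [wedge_apply, PiLp.smul_apply, wedge_apply, smul_eq_mul]
    have hmat : (Matrix.of fun i j => u i ((I.1.orderIsoOfFin I.2 j : Fin n)))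
        = C * (Matrix.of fun k j => e k ((I.1.orderIsoOfFin I.2 j : Fin n))) := by
      ext i j
      rw [Matrix.mul_apply]
      have h2 := congrArg (EuclideanSpace.proj (𝕜 := ℝ) ((I.1.orderIsoOfFin I.2 j : Fin n))) (hexp i)
      simp only [map_sum, _root_.map_smul] at h2
      simpa [hC, Matrix.of_apply, smul_eq_mul] using h2
    rw [hmat, Matrix.det_mul]
  have hnorm : ‖wedge e‖ = 1 := by
    have h1 : (⟪wedge e, wedge e⟫ : ℝ) = 1 := by
      rw [inner_wedge]
      have hid : (Matrix.of fun i j => (⟪e i, e j⟫ : ℝ)) = (1 : Matrix (Fin m) (Fin m) ℝ) := by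
        ext i j
        by_cases h : i = j
        · subst h
          simp only [Matrix.of_apply, Matrix.one_apply_eq]
          rw [real_inner_self_eq_norm_sq, he.1 i, one_pow]
        · simp only [Matrix.of_apply, Matrix.one_apply_ne h]
          exact he.2 h
      rw [hid, Matrix.det_one]
    have h2 : ‖wedge e‖ ^ 2 = 1 := by rw [← real_inner_self_eq_norm_sq, h1]
    nlinarith [norm_nonneg (wedge e)]
  refine ⟨e, he, fun i => (b i).2, hproj, C.det, ?_, ?_⟩
  · have h3 := hv1
    rw [← huw, hwu, norm_smul, hnorm, mul_one, Real.norm_eq_abs] at h3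
    exact h3
  · rw [← huw, hwu]

end Helpers2

section Helpers3

open Finset Equiv Matrix
open scoped RealInnerProductSpace

theorem one_sub_prod_le_sum_one_sub {ι : Type*} [DecidableEq ι] (s : Finset ι) (f : ι → ℝ)
    (h0 : ∀ i ∈ s, 0 ≤ f i) (h1 : ∀ i ∈ s, f i ≤ 1) :
    1 - ∏ i ∈ s, f i ≤ ∑ i ∈ s, (1 - f i) := by
  induction s using Finset.induction_on with
  | empty => simp
  | @insert a s ha ih =>
    rw [Finset.prod_insert ha, Finset.sum_insert ha]
    have h0a := h0 a (Finset.mem_insert_self a s)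
    have h1a := h1 a (Finset.mem_insert_self a s)
    have h0' : ∀ i ∈ s, 0 ≤ f i := fun i hi => h0 i (Finset.mem_insert_of_mem hi)
    have h1' : ∀ i ∈ s, f i ≤ 1 := fun i hi => h1 i (Finset.mem_insert_of_mem hi)
    have hps : ∏ i ∈ s, f i ≤ 1 := Finset.prod_le_one h0' h1'
    have hps0 : 0 ≤ ∏ i ∈ s, f i := Finset.prod_nonneg h0'
    have hih := ih h0' h1'
    nlinarith

theorem det_trace_ineqs {m : ℕ} (A : Matrix (Fin m) (Fin m) ℝ)
    (hcontr : ∀ x : Fin m → ℝ, ∑ j, (∑ i, x i * A i j) ^ 2 ≤ ∑ i, x i ^ 2) :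
    1 - |A.det| ≤ (m : ℝ) - ∑ i, ∑ j, A i j ^ 2 ∧
    (m : ℝ) - ∑ i, ∑ j, A i j ^ 2 ≤ 2 * m * (1 - |A.det|) := by
  set B := A * Aᴴ with hBdef
  have hB : B.IsHermitian := Matrix.isHermitian_mul_conjTranspose_self A
  have hpsd : B.PosSemidef := Matrix.posSemidef_self_mul_conjTranspose A
  set lam := hB.eigenvalues with hlam
  have hlam0 : ∀ i, 0 ≤ lam i := hpsd.eigenvalues_nonneg
  -- quadratic form representation of eigenvalues
  have hquad : ∀ i, lam i = ∑ j, (∑ k, (hB.eigenvectorBasis i) k * A k j) ^ 2 := by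
    intro i
    have h : lam i = dotProduct (⇑(hB.eigenvectorBasis i))
        (B *ᵥ ⇑(hB.eigenvectorBasis i)) := by
      have h0 := hB.eigenvalues_eq i
      simpa using h0
    rw [h]
    have hBv : B *ᵥ ⇑(hB.eigenvectorBasis i) = A *ᵥ (Aᴴ *ᵥ ⇑(hB.eigenvectorBasis i)) := by
      rw [Matrix.mulVec_mulVec]
    rw [hBv, dotProduct_mulVec]
    simp only [dotProduct, Matrix.vecMul, Matrix.mulVec, Matrix.conjTranspose_apply,
      star_trivial]
    refine Finset.sum_congr rfl fun j _ => ?_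
    rw [pow_two]
    congr 1
    simp [dotProduct, mul_comm]
  -- eigenvalues at most 1
  have hlam1 : ∀ i, lam i ≤ 1 := by
    intro i
    have hv1 : ∑ k, ((hB.eigenvectorBasis i) k) ^ 2 = 1 := by
      have hn : ‖hB.eigenvectorBasis i‖ = 1 := hB.eigenvectorBasis.orthonormal.1 i
      have h2 : ‖hB.eigenvectorBasis i‖ ^ 2 = ∑ k, ((hB.eigenvectorBasis i) k) ^ 2 := by
        rw [EuclideanSpace.norm_eq, Real.sq_sqrt (by positivity)]
        simp [sq_abs]
      rw [← h2, hn, one_pow]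
    calc lam i = ∑ j, (∑ k, (hB.eigenvectorBasis i) k * A k j) ^ 2 := hquad i
      _ ≤ ∑ k, ((hB.eigenvectorBasis i) k) ^ 2 := hcontr _
      _ = 1 := hv1
  -- trace identity
  have htr : ∑ i, lam i = ∑ i, ∑ j, A i j ^ 2 := by
    rw [hlam, my_sum_eigenvalues hB]
    rw [hBdef, Matrix.trace]
    refine Finset.sum_congr rfl fun i _ => ?_
    simp [Matrix.diag, Matrix.mul_apply, Matrix.conjTranspose_apply, pow_two]
  -- determinant identity
  have hdet : ∏ i, lam i = A.det ^ 2 := by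
    have hBd : B.det = A.det ^ 2 := by
      rw [hBdef, Matrix.det_mul, Matrix.det_conjTranspose, star_trivial, pow_two]
    have h := hB.det_eq_prod_eigenvalues
    rw [hBd] at h
    simpa using h.symm
  have hprod0 : 0 ≤ ∏ i, lam i := Finset.prod_nonneg (fun i _ => hlam0 i)
  have hprod1 : ∏ i, lam i ≤ 1 := Finset.prod_le_one (fun i _ => hlam0 i) (fun i _ => hlam1 i)
  have habs : |A.det| ≤ 1 := by nlinarith [sq_abs A.det, abs_nonneg A.det]
  have habs2 : A.det ^ 2 ≤ |A.det| := by nlinarith [sq_abs A.det, abs_nonneg A.det]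
  have hkey1 : 1 - ∏ i, lam i ≤ ∑ i, (1 - lam i) :=
    one_sub_prod_le_sum_one_sub Finset.univ lam (fun i _ => hlam0 i) (fun i _ => hlam1 i)
  have hprodle : ∀ i, ∏ j, lam j ≤ lam i := by
    intro i
    calc ∏ j, lam j = lam i * ∏ j ∈ Finset.univ.erase i, lam j :=
          (Finset.mul_prod_erase Finset.univ lam (Finset.mem_univ i)).symm
      _ ≤ lam i * 1 := by
          have := Finset.prod_le_one (s := Finset.univ.erase i)
            (fun j _ => hlam0 j) (fun j _ => hlam1 j)
          exact mul_le_mul_of_nonneg_left this (hlam0 i)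
      _ = lam i := mul_one _
  have hsum : ∑ i, (1 - lam i) = (m : ℝ) - ∑ i, lam i := by
    rw [Finset.sum_sub_distrib]
    simp
  constructor
  · have h1 : 1 - (∏ i, lam i) ≤ (m:ℝ) - ∑ i, lam i := by rw [← hsum]; exact hkey1
    rw [← htr]
    linarith [hdet, habs2]
  · have h2 : ∑ i, (1 - lam i) ≤ (m : ℝ) * (1 - ∏ j, lam j) := by
      calc ∑ i, (1 - lam i) ≤ ∑ _i : Fin m, (1 - ∏ j, lam j) :=
            Finset.sum_le_sum (fun i _ => by linarith [hprodle i])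
        _ = (m : ℝ) * (1 - ∏ j, lam j) := by
            rw [Finset.sum_const, Finset.card_univ, Fintype.card_fin, nsmul_eq_mul]
    rw [← htr, ← hsum]
    have e1 : (m:ℝ) * (1 - A.det ^ 2) = 2 * m * (1 - |A.det|) - m * (1 - |A.det|) ^ 2 := by
      rw [← sq_abs A.det]; ring
    have e2 : 0 ≤ (m:ℝ) * (1 - |A.det|) ^ 2 :=
      mul_nonneg (Nat.cast_nonneg m) (sq_nonneg _)
    rw [hdet] at h2
    linarith

end Helpers3

section Helpers4

open Finset Matrix
open scoped RealInnerProductSpace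

variable {n m : ℕ}

theorem proj_dist_bounds (e f : Fin m → Euc n) (he : Orthonormal ℝ e) (hf : Orthonormal ℝ f)
    (P Q : Euc n →L[ℝ] Euc n)
    (hP : ∀ x, P x = ∑ i, ⟪e i, x⟫ • e i) (hQ : ∀ x, Q x = ∑ j, ⟪f j, x⟫ • f j) :
    0 ≤ (m : ℝ) - (∑ i, ∑ j, (⟪e i, f j⟫ : ℝ)^2) ∧
    (m : ℝ) - (∑ i, ∑ j, (⟪e i, f j⟫ : ℝ)^2) ≤ m * ‖P - Q‖^2 ∧
    ‖P - Q‖ ≤ 2 * Real.sqrt ((m:ℝ) - ∑ i, ∑ j, (⟪e i, f j⟫ : ℝ)^2) := by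
  set s : ℝ := ∑ i, ∑ j, (⟪e i, f j⟫ : ℝ)^2 with hs
  -- basic facts
  have hQnormsq : ∀ x, ‖Q x‖^2 = ∑ j, (⟪f j, x⟫ : ℝ)^2 := by
    intro x
    rw [← real_inner_self_eq_norm_sq, hQ x, hf.inner_sum]
    simp [pow_two]
  have hPnormsq : ∀ x, ‖P x‖^2 = ∑ i, (⟪e i, x⟫ : ℝ)^2 := by
    intro x
    rw [← real_inner_self_eq_norm_sq, hP x, he.inner_sum]
    simp [pow_two]
  have hxQ : ∀ x, (⟪x, Q x⟫ : ℝ) = ∑ j, (⟪f j, x⟫ : ℝ)^2 := by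
    intro x
    rw [hQ x, inner_sum]
    refine Finset.sum_congr rfl fun j _ => ?_
    rw [real_inner_smul_right, pow_two, real_inner_comm]
  have hxP : ∀ x, (⟪x, P x⟫ : ℝ) = ∑ i, (⟪e i, x⟫ : ℝ)^2 := by
    intro x
    rw [hP x, inner_sum]
    refine Finset.sum_congr rfl fun i _ => ?_
    rw [real_inner_smul_right, pow_two, real_inner_comm]
  have hQle : ∀ x, ‖Q x‖ ≤ ‖x‖ := by
    intro x
    have h1 : ‖Q x‖^2 = ⟪x, Q x⟫ := by rw [hQnormsq, hxQ]
    have h2 : (⟪x, Q x⟫ : ℝ) ≤ ‖x‖ * ‖Q x‖ := real_inner_le_norm x (Q x)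
    nlinarith [norm_nonneg (Q x), norm_nonneg x]
  have hPle : ∀ x, ‖P x‖ ≤ ‖x‖ := by
    intro x
    have h1 : ‖P x‖^2 = ⟪x, P x⟫ := by rw [hPnormsq, hxP]
    have h2 : (⟪x, P x⟫ : ℝ) ≤ ‖x‖ * ‖P x‖ := real_inner_le_norm x (P x)
    nlinarith [norm_nonneg (P x), norm_nonneg x]
  have hpythQ : ∀ x, ‖x - Q x‖^2 = ‖x‖^2 - ‖Q x‖^2 := by
    intro x
    have h1 : (⟪x, Q x⟫ : ℝ) = ‖Q x‖^2 := by rw [hxQ, hQnormsq]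
    rw [norm_sub_sq_real, h1]; ring
  have hpythP : ∀ x, ‖x - P x‖^2 = ‖x‖^2 - ‖P x‖^2 := by
    intro x
    have h1 : (⟪x, P x⟫ : ℝ) = ‖P x‖^2 := by rw [hxP, hPnormsq]
    rw [norm_sub_sq_real, h1]; ring
  have hei : ∀ i, ‖e i‖ = 1 := he.1
  have hfj : ∀ j, ‖f j‖ = 1 := hf.1
  -- ‖e i - Q (e i)‖² = 1 - ∑ⱼ A i j²
  have heQ : ∀ i, ‖e i - Q (e i)‖^2 = 1 - ∑ j, (⟪e i, f j⟫ : ℝ)^2 := by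
    intro i
    rw [hpythQ, hQnormsq, hei i, one_pow]
    congr 1
    exact Finset.sum_congr rfl fun j _ => by rw [real_inner_comm]
  have hfP : ∀ j, ‖f j - P (f j)‖^2 = 1 - ∑ i, (⟪e i, f j⟫ : ℝ)^2 := by
    intro j
    rw [hpythP, hPnormsq, hfj j, one_pow]
  -- nonnegativity of m - s
  have hms : 0 ≤ (m : ℝ) - s := by
    have h1 : ∀ i, (1 : ℝ) - ∑ j, (⟪e i, f j⟫ : ℝ)^2 ≥ 0 := by
      intro i; rw [← heQ i]; positivity
    have h2 : ∑ i, ((1:ℝ) - ∑ j, (⟪e i, f j⟫ : ℝ)^2) ≥ 0 :=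
      Finset.sum_nonneg (fun i _ => h1 i)
    rw [Finset.sum_sub_distrib] at h2
    simpa [hs] using h2
  refine ⟨hms, ?_, ?_⟩
  · -- lower bound
    have h1 : ∀ i, 1 - ∑ j, (⟪e i, f j⟫ : ℝ)^2 ≤ ‖P - Q‖^2 := by
      intro i
      have h2 : (P - Q) (e i) = e i - Q (e i) := by
        have h3 : P (e i) = e i := by
          rw [hP (e i)]
          have h4 := orthonormal_iff_ite.mp he
          simp [h4]
        simp [ContinuousLinearMap.sub_apply, h3]
      have h5 : ‖(P - Q) (e i)‖ ≤ ‖P - Q‖ * ‖e i‖ := (P - Q).le_opNorm (e i)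
      rw [h2, hei i, mul_one] at h5
      have h6 := heQ i
      nlinarith [norm_nonneg (e i - Q (e i)), norm_nonneg (P - Q)]
    have h7 : ∑ i, ((1:ℝ) - ∑ j, (⟪e i, f j⟫ : ℝ)^2) ≤ ∑ _i : Fin m, ‖P - Q‖^2 :=
      Finset.sum_le_sum (fun i _ => h1 i)
    rw [Finset.sum_sub_distrib, Finset.sum_const, Finset.sum_const, Finset.card_univ,
      Fintype.card_fin, nsmul_eq_mul, nsmul_eq_mul] at h7
    rw [mul_one] at h7
    rw [hs]
    exact h7
  · -- upper bound
    refine ContinuousLinearMap.opNorm_le_bound _ (mul_nonneg (by norm_num) (Real.sqrt_nonneg _)) (fun x => ?_)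
    have hsplit : (P - Q) x = (P x - Q (P x)) + (Q (P x) - Q x) := by
      simp [ContinuousLinearMap.sub_apply]
    have hterm2 : ‖Q (P x) - Q x‖ ≤ Real.sqrt ((m:ℝ) - s) * ‖x‖ := by
      have h1 : Q (P x) - Q x = Q (P x - x) := by rw [map_sub]
      have h2 : ‖Q (P x - x)‖^2 = ∑ j, (⟪f j, P x - x⟫ : ℝ)^2 := hQnormsq _
      have h3 : ∀ j, (⟪f j, P x - x⟫ : ℝ) = ⟪P (f j) - f j, x⟫ := by
        intro j
        have h4 : (⟪f j, P x⟫ : ℝ) = ⟪P (f j), x⟫ := by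
          rw [hP x, hP (f j), inner_sum, sum_inner]
          refine Finset.sum_congr rfl fun i _ => ?_
          rw [real_inner_smul_right, real_inner_smul_left]
          rw [real_inner_comm (e i) (f j)]
          ring
        rw [inner_sub_right, inner_sub_left, h4]
      have h5 : ∀ j, (⟪f j, P x - x⟫ : ℝ)^2 ≤ (1 - ∑ i, (⟪e i, f j⟫ : ℝ)^2) * ‖x‖^2 := by
        intro j
        rw [h3 j]
        have h6 : |(⟪P (f j) - f j, x⟫ : ℝ)| ≤ ‖P (f j) - f j‖ * ‖x‖ :=
          abs_real_inner_le_norm _ _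
        have h7 : ‖P (f j) - f j‖^2 = 1 - ∑ i, (⟪e i, f j⟫ : ℝ)^2 := by
          rw [norm_sub_rev]; exact hfP j
        nlinarith [sq_abs (⟪P (f j) - f j, x⟫ : ℝ), abs_nonneg (⟪P (f j) - f j, x⟫ : ℝ),
          norm_nonneg (P (f j) - f j), norm_nonneg x]
      have h8 : ‖Q (P x - x)‖^2 ≤ ((m:ℝ) - s) * ‖x‖^2 := by
        rw [h2]
        calc ∑ j, (⟪f j, P x - x⟫ : ℝ)^2
            ≤ ∑ j, (1 - ∑ i, (⟪e i, f j⟫ : ℝ)^2) * ‖x‖^2 :=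
              Finset.sum_le_sum (fun j _ => h5 j)
          _ = ((m:ℝ) - s) * ‖x‖^2 := by
              rw [← Finset.sum_mul]
              congr 1
              rw [Finset.sum_sub_distrib, Finset.sum_const, Finset.card_univ, Fintype.card_fin,
                nsmul_eq_mul, mul_one, hs, Finset.sum_comm]
      rw [h1]
      have h9 : ‖Q (P x - x)‖ = Real.sqrt (‖Q (P x - x)‖^2) := (Real.sqrt_sq (norm_nonneg _)).symm
      rw [h9]
      calc Real.sqrt (‖Q (P x - x)‖^2) ≤ Real.sqrt (((m:ℝ) - s) * ‖x‖^2) := Real.sqrt_le_sqrt h8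
        _ = Real.sqrt ((m:ℝ) - s) * ‖x‖ := by
            rw [Real.sqrt_mul hms, Real.sqrt_sq (norm_nonneg x)]
    have hterm1 : ‖P x - Q (P x)‖ ≤ Real.sqrt ((m:ℝ) - s) * ‖x‖ := by
      have h1 : P x - Q (P x) = ∑ i, (⟪e i, x⟫ : ℝ) • (e i - Q (e i)) := by
        rw [hP x, map_sum]
        rw [← Finset.sum_sub_distrib]
        refine Finset.sum_congr rfl fun i _ => ?_
        rw [ContinuousLinearMap.map_smul, smul_sub]
      rw [h1]
      have h2 : ‖∑ i, (⟪e i, x⟫ : ℝ) • (e i - Q (e i))‖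
          ≤ ∑ i, |(⟪e i, x⟫ : ℝ)| * ‖e i - Q (e i)‖ := by
        refine (norm_sum_le _ _).trans ?_
        refine Finset.sum_le_sum fun i _ => ?_
        rw [norm_smul, Real.norm_eq_abs]
      have h3 : (∑ i, |(⟪e i, x⟫ : ℝ)| * ‖e i - Q (e i)‖)^2
          ≤ (∑ i, (⟪e i, x⟫ : ℝ)^2) * (∑ i, ‖e i - Q (e i)‖^2) := by
        have := Finset.sum_mul_sq_le_sq_mul_sq Finset.univ
          (fun i => |(⟪e i, x⟫ : ℝ)|) (fun i => ‖e i - Q (e i)‖)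
        simpa [sq_abs] using this
      have h4 : ∑ i, ‖e i - Q (e i)‖^2 = (m:ℝ) - s := by
        have : ∀ i, ‖e i - Q (e i)‖^2 = 1 - ∑ j, (⟪e i, f j⟫ : ℝ)^2 := heQ
        rw [Finset.sum_congr rfl (fun i _ => this i), Finset.sum_sub_distrib,
          Finset.sum_const, Finset.card_univ, Fintype.card_fin, nsmul_eq_mul, mul_one, hs]
      have h5 : ∑ i, (⟪e i, x⟫ : ℝ)^2 ≤ ‖x‖^2 := by
        rw [← hPnormsq]
        have := hPle x
        nlinarith [norm_nonneg (P x), norm_nonneg x]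
      have h6 : (∑ i, |(⟪e i, x⟫ : ℝ)| * ‖e i - Q (e i)‖)^2 ≤ ((m:ℝ) - s) * ‖x‖^2 := by
        rw [h4] at h3
        nlinarith [hms]
      have h7 : 0 ≤ ∑ i, |(⟪e i, x⟫ : ℝ)| * ‖e i - Q (e i)‖ :=
        Finset.sum_nonneg fun i _ => mul_nonneg (abs_nonneg _) (norm_nonneg _)
      refine h2.trans ?_
      have h8 : ∑ i, |(⟪e i, x⟫ : ℝ)| * ‖e i - Q (e i)‖
          = Real.sqrt ((∑ i, |(⟪e i, x⟫ : ℝ)| * ‖e i - Q (e i)‖)^2) :=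
        (Real.sqrt_sq h7).symm
      rw [h8]
      calc Real.sqrt ((∑ i, |(⟪e i, x⟫ : ℝ)| * ‖e i - Q (e i)‖)^2)
          ≤ Real.sqrt (((m:ℝ) - s) * ‖x‖^2) := Real.sqrt_le_sqrt h6
        _ = Real.sqrt ((m:ℝ) - s) * ‖x‖ := by
            rw [Real.sqrt_mul hms, Real.sqrt_sq (norm_nonneg x)]
    calc ‖(P - Q) x‖ = ‖(P x - Q (P x)) + (Q (P x) - Q x)‖ := by rw [hsplit]
      _ ≤ ‖P x - Q (P x)‖ + ‖Q (P x) - Q x‖ := norm_add_le _ _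
      _ ≤ Real.sqrt ((m:ℝ) - s) * ‖x‖ + Real.sqrt ((m:ℝ) - s) * ‖x‖ := by
          exact add_le_add hterm1 hterm2
      _ = 2 * Real.sqrt ((m:ℝ) - s) * ‖x‖ := by ring

end Helpers4

section FinalProof
open Finset Matrix
open scoped RealInnerProductSpace

/-- **Lemma (the simple `m`-vector metric is bilipschitz equivalent to the projection
metric).** Let `0 < m < n` and define `d(V,W) = min {‖v - w‖ₘ, ‖v + w‖ₘ}` for unit
simple `m`-vectors `v, w` representing `V` and `W`. Then there are constants
`0 < c ≤ C < ∞` (depending only on `n`, `m`) such that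
`c d(V,W) ≤ ‖π_V - π_W‖ ≤ C d(V,W)` for all `V, W ∈ G(n,m)` (and all choices of
representatives, so that in particular `d` is well defined). -/
theorem wedge_metric_bilipschitz_projection_metric
    (n m : ℕ) (h0m : 0 < m) (hmn : m < n) :
    ∃ c C : ℝ, 0 < c ∧ c ≤ C ∧
      ∀ (V W : Grass n m) (v w : Lam n m),
        (∃ u : Fin m → Euc n, (∀ i, u i ∈ V.1) ∧
          Submodule.span ℝ (Set.range u) = V.1 ∧ wedge u = v) →
        (∃ u : Fin m → Euc n, (∀ i, u i ∈ W.1) ∧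
          Submodule.span ℝ (Set.range u) = W.1 ∧ wedge u = w) →
        ‖v‖ = 1 → ‖w‖ = 1 →
        c * min ‖v - w‖ ‖v + w‖ ≤ ‖projCLM V.1 - projCLM W.1‖ ∧
        ‖projCLM V.1 - projCLM W.1‖ ≤ C * min ‖v - w‖ ‖v + w‖ := by
  have hm1 : (1:ℝ) ≤ (m:ℝ) := by exact_mod_cast h0m
  have h2m : (0:ℝ) < 2 * m := by linarith
  refine ⟨(Real.sqrt (2 * m))⁻¹, 2 * Real.sqrt m, ?_, ?_, ?_⟩
  · rw [inv_pos]
    exact Real.sqrt_pos.mpr h2m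
  · have h1 : (1:ℝ) ≤ Real.sqrt (2 * m) := by
      rw [show (1:ℝ) = Real.sqrt 1 from (Real.sqrt_one).symm]
      exact Real.sqrt_le_sqrt (by linarith)
    have h2 : (1:ℝ) ≤ Real.sqrt m := by
      rw [show (1:ℝ) = Real.sqrt 1 from (Real.sqrt_one).symm]
      exact Real.sqrt_le_sqrt hm1
    have h3 : (Real.sqrt (2*m))⁻¹ ≤ 1 := by
      rw [inv_le_one_iff₀]
      right; exact h1
    linarith
  · intro V W v w hv hw hv1 hw1
    obtain ⟨e, he, heV, hPx, cv, hcv, hveq⟩ := exists_good_frame V v hv hv1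
    obtain ⟨f, hf, hfW, hQx, cw, hcw, hweq⟩ := exists_good_frame W w hw hw1
    set A : Matrix (Fin m) (Fin m) ℝ := Matrix.of fun i j => (⟪e i, f j⟫ : ℝ) with hA
    have hvw : |(⟪v, w⟫ : ℝ)| = |A.det| := by
      rw [hveq, hweq, real_inner_smul_left, real_inner_smul_right, inner_wedge]
      rw [abs_mul, abs_mul, hcv, hcw, one_mul, one_mul]
    have hd2 : min ‖v - w‖ ‖v + w‖ ^ 2 = 2 - 2 * |A.det| := by
      rw [min_norm_sq_eq hv1 hw1, hvw]
    -- the contraction property of A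
    have hcontr : ∀ x : Fin m → ℝ, ∑ j, (∑ i, x i * A i j)^2 ≤ ∑ i, x i ^ 2 := by
      intro x
      set u : Euc n := ∑ i, x i • e i with hu
      have h1 : ∀ j, ∑ i, x i * A i j = ⟪f j, u⟫ := by
        intro j
        rw [hu, inner_sum]
        refine Finset.sum_congr rfl fun i _ => ?_
        rw [real_inner_smul_right, hA]
        simp only [Matrix.of_apply]
        rw [real_inner_comm (f j) (e i)]
      have h2 : ∑ j, (⟪f j, u⟫ : ℝ)^2 ≤ ‖u‖^2 := by
        have h3 := hf.sum_inner_products_le (x := u) (s := Finset.univ)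
        simpa [Real.norm_eq_abs, sq_abs] using h3
      have h4 : ‖u‖^2 = ∑ i, x i ^ 2 := by
        rw [← real_inner_self_eq_norm_sq, hu, he.inner_sum]
        simp [pow_two]
      calc ∑ j, (∑ i, x i * A i j)^2 = ∑ j, (⟪f j, u⟫ : ℝ)^2 := by
            exact Finset.sum_congr rfl fun j _ => by rw [h1 j]
        _ ≤ ‖u‖^2 := h2
        _ = ∑ i, x i ^ 2 := h4
    obtain ⟨hIneq1, hIneq2⟩ := det_trace_ineqs A hcontr
    obtain ⟨hms, hlow, hup⟩ := proj_dist_bounds e f he hf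
      (projCLM V.1) (projCLM W.1) hPx hQx
    have hsw : ∑ i, ∑ j, A i j ^ 2 = ∑ i, ∑ j, (⟪e i, f j⟫ : ℝ)^2 := rfl
    rw [hsw] at hIneq1 hIneq2
    set s : ℝ := ∑ i, ∑ j, (⟪e i, f j⟫ : ℝ)^2 with hs
    set d := min ‖v - w‖ ‖v + w‖ with hd
    set D := ‖projCLM V.1 - projCLM W.1‖ with hD
    have hd0 : 0 ≤ d := le_min (norm_nonneg _) (norm_nonneg _)
    have hD0 : 0 ≤ D := norm_nonneg _
    constructor
    · have h1 : d^2 ≤ 2 * m * D^2 := by nlinarith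
      have h2 : d ≤ Real.sqrt (2*m) * D := by
        have h3 : Real.sqrt (d^2) ≤ Real.sqrt ((Real.sqrt (2*m) * D)^2) := by
          apply Real.sqrt_le_sqrt
          rw [mul_pow, Real.sq_sqrt (le_of_lt h2m)]
          exact h1
        rwa [Real.sqrt_sq hd0, Real.sqrt_sq (by positivity)] at h3
      have h4 : 0 < Real.sqrt (2*m) := Real.sqrt_pos.mpr h2m
      calc (Real.sqrt (2*m))⁻¹ * d ≤ (Real.sqrt (2*m))⁻¹ * (Real.sqrt (2*m) * D) :=
            mul_le_mul_of_nonneg_left h2 (by positivity)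
        _ = D := by field_simp
    · have h1 : (m:ℝ) - s ≤ (m:ℝ) * d^2 := by nlinarith
      calc D ≤ 2 * Real.sqrt ((m:ℝ) - s) := hup
        _ ≤ 2 * Real.sqrt ((m:ℝ) * d^2) := by
            exact mul_le_mul_of_nonneg_left (Real.sqrt_le_sqrt h1) (by norm_num)
        _ = 2 * Real.sqrt m * d := by
            rw [Real.sqrt_mul (by positivity) (d^2), Real.sqrt_sq hd0]; ring


end FinalProof
end
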